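/- arXiv:2601.06019 — 6 statements merged into one kernel-verified Lean document; each statement's English description precedes it below -/
import Mathlib

section
/- There exist absolute constants c, C > 0 such that the following holds. Let λ = (λ₁ ≥ λ₂ ≥ ⋯) and μ = (μ₁ ≥ μ₂ ≥ ⋯) be partitions of n, let A be the multiset containing λᵢ copies of i−1 for each i, and let B be the multiset containing μᵢ copies of i−1 for each i. If π is a uniformly random permutation of {1,…,n}, then c · M(A)M(B)/n ≤ Var[∑_{i=1}^n aᵢ b_{π(i)}] ≤ C · M(A)M(B)/n, where a₁,…,aₙ and b₁,…,bₙ enumerate A and B respectively. -/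
/-- The statistic `M = ∑_{i=1}^ℓ (i-1)^2 μᵢ` of a decreasing sequence of multiplicities
given as a list (`l.getD (i-1) 0 = μᵢ`, i.e. 0-indexed). -/
def Mpart (l : List ℕ) : ℕ := ∑ i ∈ Finset.range l.length, i ^ 2 * l.getD i 0

/-- The multiset containing `lᵢ` copies of `i - 1` (with 1-based `i`), i.e. `l.getD i 0`
copies of the real number `i` for each 0-based index `i`. -/
def partMultiset (l : List ℕ) : Multiset ℝ :=
  ∑ i ∈ Finset.range l.length, Multiset.replicate (l.getD i 0) (i : ℝ)

/-- The variance of `f(π)` where `π` is a uniformly random permutation of `{1,…,n}`. -/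
noncomputable def permVar {n : ℕ} (f : Equiv.Perm (Fin n) → ℝ) : ℝ :=
  (∑ π : Equiv.Perm (Fin n),
      (f π - (∑ σ : Equiv.Perm (Fin n), f σ) / (Nat.factorial n : ℝ)) ^ 2) /
    (Nat.factorial n : ℝ)

open Finset Equiv

section PermSums

variable {n : ℕ}

lemma sum_comp_right (g : Perm (Fin n) → ℝ) (τ : Perm (Fin n)) :
    ∑ π : Perm (Fin n), g (π * τ) = ∑ π : Perm (Fin n), g π :=
  Fintype.sum_equiv (Equiv.mulRight τ) _ _ (fun _ => rfl)

lemma sum_single_const (b : Fin n → ℝ) (g : ℝ → ℝ) (i i' : Fin n) :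
    ∑ π : Perm (Fin n), g (b (π i)) = ∑ π : Perm (Fin n), g (b (π i')) := by
  have := sum_comp_right (fun π => g (b (π i'))) (Equiv.swap i' i)
  simp only [Perm.mul_apply] at this
  rw [← this]
  simp [Equiv.swap_apply_left]

lemma sum_pair_const (b : Fin n → ℝ) (i j i' j' : Fin n) (hij : i ≠ j) (hij' : i' ≠ j') :
    ∑ π : Perm (Fin n), b (π i) * b (π j) = ∑ π : Perm (Fin n), b (π i') * b (π j') := by
  set w : Fin n := Equiv.swap i i' j' with hw
  have hwi : w ≠ i := by
    intro h
    rw [hw] at h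
    nth_rewrite 2 [← Equiv.swap_apply_right i i'] at h
    exact hij'.symm ((Equiv.swap i i').injective h)
  set σ : Perm (Fin n) := Equiv.swap j w * Equiv.swap i i' with hσ
  have h1 : σ i' = i := by
    simp only [hσ, Perm.mul_apply, Equiv.swap_apply_right]
    exact Equiv.swap_apply_of_ne_of_ne hij hwi.symm
  have h2 : σ j' = j := by
    simp only [hσ, Perm.mul_apply, ← hw, Equiv.swap_apply_right]
  have := sum_comp_right (fun π => b (π i') * b (π j')) σ
  simp only [Perm.mul_apply, h1, h2] at this
  exact this

lemma permVar_eq (f : Perm (Fin n) → ℝ) :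
    permVar f = (∑ π : Perm (Fin n), f π ^ 2) / (n.factorial : ℝ)
      - ((∑ π : Perm (Fin n), f π) / (n.factorial : ℝ)) ^ 2 := by
  have hN : (0:ℝ) < (n.factorial : ℝ) := by positivity
  have hcard : (Fintype.card (Perm (Fin n)) : ℝ) = (n.factorial : ℝ) := by
    rw [Fintype.card_perm, Fintype.card_fin]
  unfold permVar
  have hexp : ∀ π : Perm (Fin n), (f π - (∑ σ : Perm (Fin n), f σ) / (n.factorial : ℝ)) ^ 2
      = f π ^ 2 - 2 * ((∑ σ : Perm (Fin n), f σ) / (n.factorial : ℝ)) * f π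
        + ((∑ σ : Perm (Fin n), f σ) / (n.factorial : ℝ)) ^ 2 := fun π => by ring
  rw [Finset.sum_congr rfl (fun π _ => hexp π)]
  rw [Finset.sum_add_distrib, Finset.sum_sub_distrib, ← Finset.mul_sum, Finset.sum_const,
    Finset.card_univ, nsmul_eq_mul, hcard]
  field_simp
  ring

lemma sum_single_val (b : Fin n → ℝ) (g : ℝ → ℝ) (i : Fin n) :
    (n : ℝ) * ∑ π : Perm (Fin n), g (b (π i)) = (n.factorial : ℝ) * ∑ j, g (b j) := by
  have h1 : ∑ i' : Fin n, ∑ π : Perm (Fin n), g (b (π i'))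
      = (n : ℝ) * ∑ π : Perm (Fin n), g (b (π i)) := by
    rw [Finset.sum_congr rfl (fun i' _ => sum_single_const b g i' i), Finset.sum_const,
      Finset.card_univ, Fintype.card_fin, nsmul_eq_mul]
  rw [← h1, Finset.sum_comm,
    Finset.sum_congr rfl (fun (π : Perm (Fin n)) _ => Equiv.sum_comp π fun j => g (b j)),
    Finset.sum_const, Finset.card_univ, Fintype.card_perm, Fintype.card_fin, nsmul_eq_mul]

lemma offDiag_sum (g : Fin n → ℝ) :
    ∑ p ∈ (univ : Finset (Fin n)).offDiag, g p.1 * g p.2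
      = (∑ i, g i) ^ 2 - ∑ i, g i ^ 2 := by
  have h := Finset.sum_union (s₁ := (univ : Finset (Fin n)).diag)
    (s₂ := (univ : Finset (Fin n)).offDiag) (f := fun p => g p.1 * g p.2)
    (Finset.disjoint_diag_offDiag _)
  rw [Finset.diag_union_offDiag, Finset.sum_product, Finset.sum_diag] at h
  have h2 : ∑ i : Fin n, ∑ j : Fin n, g i * g j = (∑ i, g i) ^ 2 := by
    rw [sq, Finset.sum_mul_sum]
  have h3 : ∑ i : Fin n, g i * g i = ∑ i, g i ^ 2 := by
    simp [sq]
  rw [h2, h3] at h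
  linarith

lemma sum_pair_val (hn : 2 ≤ n) (b : Fin n → ℝ) (i j : Fin n) (hij : i ≠ j) :
    ((n : ℝ) * n - n) * ∑ π : Perm (Fin n), b (π i) * b (π j)
      = (n.factorial : ℝ) * ((∑ k, b k) ^ 2 - ∑ k, b k ^ 2) := by
  have hcard : (((univ : Finset (Fin n)).offDiag).card : ℝ) = (n : ℝ) * n - n := by
    rw [Finset.offDiag_card, Finset.card_univ, Fintype.card_fin]
    have : n ≤ n * n := Nat.le_mul_of_pos_left n (by omega)
    push_cast [Nat.cast_sub this]
    ring
  have h1 : ∑ p ∈ (univ : Finset (Fin n)).offDiag, ∑ π : Perm (Fin n), b (π p.1) * b (π p.2)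
      = (((univ : Finset (Fin n)).offDiag).card : ℝ) * ∑ π : Perm (Fin n), b (π i) * b (π j) := by
    rw [Finset.sum_congr rfl
      (fun p hp => sum_pair_const b p.1 p.2 i j (Finset.mem_offDiag.mp hp).2.2 hij),
      Finset.sum_const, nsmul_eq_mul]
  rw [← hcard, ← h1, Finset.sum_comm]
  have h2 : ∀ π : Perm (Fin n), ∑ p ∈ (univ : Finset (Fin n)).offDiag, b (π p.1) * b (π p.2)
      = (∑ k, b k) ^ 2 - ∑ k, b k ^ 2 := by
    intro π
    rw [offDiag_sum (fun k => b (π k)), Equiv.sum_comp π b,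
      Equiv.sum_comp π (fun k => b k ^ 2)]
  rw [Finset.sum_congr rfl (fun π _ => h2 π), Finset.sum_const, Finset.card_univ,
    Fintype.card_perm, Fintype.card_fin, nsmul_eq_mul]

lemma permVar_formula (hn : 2 ≤ n) (a b : Fin n → ℝ) :
    permVar (fun π => ∑ i, a i * b (π i)) =
      ((∑ i, a i ^ 2) - (∑ i, a i) ^ 2 / n) * ((∑ i, b i ^ 2) - (∑ i, b i) ^ 2 / n)
        / ((n : ℝ) - 1) := by
  have hn0 : (0:ℝ) < n := by exact_mod_cast Nat.lt_of_lt_of_le Nat.zero_lt_two hn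
  have hn1 : (1:ℝ) < n := by exact_mod_cast hn
  have hN : (0:ℝ) < (n.factorial : ℝ) := by positivity
  set N := (n.factorial : ℝ) with hNdef
  set A1 := ∑ i, a i with hA1
  set A2 := ∑ i, a i ^ 2 with hA2
  set B1 := ∑ i, b i with hB1
  set B2 := ∑ i, b i ^ 2 with hB2
  have hnn : (n:ℝ) * n - n ≠ 0 := by nlinarith
  set i₀ : Fin n := ⟨0, by omega⟩ with hi₀
  set j₀ : Fin n := ⟨1, by omega⟩ with hj₀
  have hij : i₀ ≠ j₀ := by simp [hi₀, hj₀, Fin.ext_iff]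
  have hS1 : ∀ i : Fin n, ∑ π : Perm (Fin n), b (π i) = N * B1 / n := by
    intro i
    have := sum_single_val b (fun x => x) i
    field_simp
    linarith [this]
  have hQ : ∀ i : Fin n, ∑ π : Perm (Fin n), b (π i) * b (π i) = N * B2 / n := by
    intro i
    have h := sum_single_val b (fun x => x * x) i
    have h2 : ∑ j, b j * b j = B2 := by simp [hB2, sq]
    rw [h2] at h
    simp only [← sq] at h
    rw [← hNdef] at h
    field_simp
    linarith [h]
  have hR : ∑ π : Perm (Fin n), b (π i₀) * b (π j₀) = N * (B1 ^ 2 - B2) / ((n:ℝ) * n - n) := by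
    have h := sum_pair_val hn b i₀ j₀ hij
    rw [← hB1, ← hB2, ← hNdef] at h
    rw [eq_div_iff hnn]
    linarith [h]
  have hS0 : ∑ π : Perm (Fin n), (∑ i, a i * b (π i)) = A1 * (N * B1 / n) := by
    rw [Finset.sum_comm]
    rw [Finset.sum_congr rfl (fun i (_ : i ∈ univ) => by
      rw [← Finset.mul_sum, hS1 i] :
      ∀ i ∈ (univ : Finset (Fin n)), ∑ π : Perm (Fin n), a i * b (π i) = a i * (N * B1 / n))]
    rw [← Finset.sum_mul]
  have hS2 : ∑ π : Perm (Fin n), (∑ i, a i * b (π i)) ^ 2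
      = A2 * (N * B2 / n) + (A1 ^ 2 - A2) * (N * (B1 ^ 2 - B2) / ((n:ℝ) * n - n)) := by
    have step1 : ∀ π : Perm (Fin n), (∑ i, a i * b (π i)) ^ 2
        = ∑ p ∈ (univ : Finset (Fin n)) ×ˢ (univ : Finset (Fin n)),
            (a p.1 * b (π p.1)) * (a p.2 * b (π p.2)) := by
      intro π
      rw [sq, Finset.sum_mul_sum, Finset.sum_product]
    rw [Finset.sum_congr rfl (fun π _ => step1 π), Finset.sum_comm]
    have step2 : ∀ p ∈ (univ : Finset (Fin n)) ×ˢ (univ : Finset (Fin n)),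
        ∑ π : Perm (Fin n), (a p.1 * b (π p.1)) * (a p.2 * b (π p.2))
          = (a p.1 * a p.2) * ∑ π : Perm (Fin n), b (π p.1) * b (π p.2) := by
      intro p _
      rw [Finset.mul_sum]
      exact Finset.sum_congr rfl fun π _ => by ring
    rw [Finset.sum_congr rfl step2, ← Finset.diag_union_offDiag (univ : Finset (Fin n)),
      Finset.sum_union (Finset.disjoint_diag_offDiag _), Finset.sum_diag]
    have hdiag : ∑ i : Fin n, (a i * a i) * ∑ π : Perm (Fin n), b (π i) * b (π i)
        = A2 * (N * B2 / n) := by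
      rw [Finset.sum_congr rfl (fun i (_ : i ∈ univ) => by rw [hQ i])]
      rw [← Finset.sum_mul]
      congr 1
      simp [hA2, sq]
    have hoff : ∑ p ∈ (univ : Finset (Fin n)).offDiag,
        (a p.1 * a p.2) * ∑ π : Perm (Fin n), b (π p.1) * b (π p.2)
          = (A1 ^ 2 - A2) * (N * (B1 ^ 2 - B2) / ((n:ℝ) * n - n)) := by
      rw [Finset.sum_congr rfl (fun p hp => by
        rw [sum_pair_const b p.1 p.2 i₀ j₀ (Finset.mem_offDiag.mp hp).2.2 hij, hR])]
      rw [← Finset.sum_mul, offDiag_sum a]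
    rw [hdiag, hoff]
  have hd1 : (n:ℝ) - 1 ≠ 0 := sub_ne_zero.mpr (ne_of_gt hn1)
  have hnn2 : (n:ℝ) * n - n = n * (n - 1) := by ring
  rw [hnn2] at hS2
  rw [permVar_eq, hS0, hS2, ← hNdef]
  field_simp
  ring

lemma permVar_of_subsingleton (hn : n ≤ 1) (f : Perm (Fin n) → ℝ) : permVar f = 0 := by
  haveI : Subsingleton (Fin n) := ⟨fun x y => Fin.ext (by omega)⟩
  haveI : Subsingleton (Perm (Fin n)) := ⟨fun x y => Equiv.ext fun i => Subsingleton.elim _ _⟩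
  haveI : Unique (Perm (Fin n)) := Unique.mk' _
  have hfac : n.factorial = 1 := by interval_cases n <;> rfl
  unfold permVar
  rw [Fintype.sum_unique, Fintype.sum_unique, hfac]
  simp

end PermSums

section NatSide

lemma list_sum_eq_range (l : List ℕ) :
    l.sum = ∑ i ∈ range l.length, l.getD i 0 := by
  induction l with
  | nil => simp
  | cons x l ih =>
      rw [List.sum_cons, List.length_cons, Finset.sum_range_succ']
      simp only [List.getD_cons_succ, List.getD_cons_zero]
      rw [← ih]; ring

lemma six_sum_sq (k : ℕ) : 6 * ∑ i ∈ range (k+1), i^2 = k * (k+1) * (2*k+1) := by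
  induction k with
  | zero => simp
  | succ k ih => rw [Finset.sum_range_succ, Nat.mul_add, ih]; ring

lemma two_sum_id (k : ℕ) : 2 * ∑ i ∈ range (k+1), i = k * (k+1) := by
  rw [Nat.mul_comm, Finset.sum_range_id_mul_two (k+1), Nat.add_sub_cancel, Nat.mul_comm]

lemma exchange (F : ℕ → ℕ → ℕ) (L : ℕ) :
    ∑ i ∈ range L, ∑ k ∈ Finset.Ico i L, F i k
      = ∑ k ∈ range L, ∑ i ∈ range (k+1), F i k := by
  induction L with
  | zero => simp
  | succ L ih =>
      rw [Finset.sum_range_succ, Finset.sum_range_succ (fun k => ∑ i ∈ range (k+1), F i k), ← ih]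
      have h1 : ∀ i ∈ range L, ∑ k ∈ Finset.Ico i (L+1), F i k
          = (∑ k ∈ Finset.Ico i L, F i k) + F i L := by
        intro i hi
        exact Finset.sum_Ico_succ_top (le_of_lt (Finset.mem_range.mp hi)) _
      rw [Finset.sum_congr rfl h1, Finset.sum_add_distrib, Nat.Ico_succ_singleton,
        Finset.sum_singleton, Finset.sum_range_succ]
      ring

variable (l : List ℕ)

/-- successive differences -/
def dd (k : ℕ) : ℕ := l.getD k 0 - l.getD (k+1) 0

lemma getD_mono (hs : l.Pairwise (· ≥ ·)) (i : ℕ) : l.getD (i+1) 0 ≤ l.getD i 0 := by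
  by_cases h : i + 1 < l.length
  · rw [List.getD_eq_getElem l 0 h, List.getD_eq_getElem l 0 (by omega)]
    exact List.Pairwise.rel_get_of_lt hs (a := ⟨i, by omega⟩) (b := ⟨i+1, h⟩) (by simp [Fin.lt_def])
  · rw [List.getD_eq_default l 0 (by omega)]
    exact Nat.zero_le _

lemma layer (hs : l.Pairwise (· ≥ ·)) :
    ∀ t i, l.length = i + t → l.getD i 0 = ∑ k ∈ Finset.Ico i l.length, dd l k := by
  intro t
  induction t with
  | zero =>
      intro i hi
      rw [hi, Nat.add_zero, Finset.Ico_self, Finset.sum_empty,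
        List.getD_eq_default l 0 (by omega)]
  | succ t ih =>
      intro i hi
      rw [Finset.sum_eq_sum_Ico_succ_bot (by omega) (dd l), ← ih (i+1) (by omega)]
      have := getD_mono l hs i
      unfold dd
      omega

lemma layer_sum (hs : l.Pairwise (· ≥ ·)) (f : ℕ → ℕ) :
    ∑ i ∈ range l.length, f i * l.getD i 0
      = ∑ k ∈ range l.length, dd l k * ∑ i ∈ range (k+1), f i := by
  have h1 : ∀ i ∈ range l.length, f i * l.getD i 0 = ∑ k ∈ Finset.Ico i l.length, f i * dd l k := by
    intro i hi
    rw [← Finset.mul_sum, ← layer l hs (l.length - i) i (by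
      have := Finset.mem_range.mp hi; omega)]
  rw [Finset.sum_congr rfl h1, exchange]
  refine Finset.sum_congr rfl fun k _ => ?_
  rw [Finset.mul_sum]
  exact Finset.sum_congr rfl fun i _ => Nat.mul_comm _ _

lemma pointwise_ineq (k j : ℕ) :
    8 * ((∑ i ∈ range (k+1), i) * ∑ i ∈ range (j+1), i)
      ≤ 3 * ((k+1) * ∑ i ∈ range (j+1), i^2) + 3 * ((j+1) * ∑ i ∈ range (k+1), i^2) := by
  have h1 := two_sum_id k
  have h2 := two_sum_id j
  have h3 := six_sum_sq k
  have h4 := six_sum_sq j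
  zify at h1 h2 h3 h4 ⊢
  have h5 : (0:ℤ) ≤ ((k:ℤ)+1) * ((j:ℤ)+1) * ((j:ℤ)-(k:ℤ))^2 := by positivity
  have h6 : (0:ℤ) ≤ ((k:ℤ)+1) * ((j:ℤ)+1) * ((j:ℤ)+(k:ℤ)) := by positivity
  set S1k : ℤ := ∑ x ∈ range (k + 1), (x:ℤ)
  set S1j : ℤ := ∑ x ∈ range (j + 1), (x:ℤ)
  set S2k : ℤ := ∑ x ∈ range (k + 1), (x:ℤ)^2
  set S2j : ℤ := ∑ x ∈ range (j + 1), (x:ℤ)^2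
  suffices h : 12 * (8 * (S1k * S1j)) ≤ 12 * (3 * (((k:ℤ)+1) * S2j) + 3 * (((j:ℤ)+1) * S2k)) by
    linarith
  have e1 : 12 * (8 * (S1k * S1j)) = 24 * ((2 * S1k) * (2 * S1j)) := by ring
  have e2 : 12 * (3 * (((k:ℤ)+1) * S2j) + 3 * (((j:ℤ)+1) * S2k))
      = 6 * ((k:ℤ)+1) * (6 * S2j) + 6 * ((j:ℤ)+1) * (6 * S2k) := by ring
  rw [e1, e2, h1, h2, h3, h4]
  nlinarith [h5, h6]

lemma quad_ineq (L : ℕ) (x : ℕ → ℕ) :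
    4 * (∑ k ∈ range L, x k * ∑ i ∈ range (k+1), i) ^ 2
      ≤ 3 * (∑ k ∈ range L, x k * (k+1))
          * ∑ k ∈ range L, x k * ∑ i ∈ range (k+1), i ^ 2 := by
  set S1 : ℕ → ℕ := fun k => ∑ i ∈ range (k+1), i with hS1
  set S2 : ℕ → ℕ := fun k => ∑ i ∈ range (k+1), i ^ 2 with hS2
  have hL : 2 * (4 * (∑ k ∈ range L, x k * S1 k) ^ 2)
      = ∑ k ∈ range L, ∑ j ∈ range L, (x k * x j) * (8 * (S1 k * S1 j)) := by
    have : 2 * (4 * (∑ k ∈ range L, x k * S1 k) ^ 2)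
        = 8 * ((∑ k ∈ range L, x k * S1 k) * ∑ j ∈ range L, x j * S1 j) := by ring
    rw [this, Finset.sum_mul_sum, Finset.mul_sum]
    refine Finset.sum_congr rfl fun k _ => ?_
    rw [Finset.mul_sum]
    exact Finset.sum_congr rfl fun j _ => by ring
  have hR1 : 3 * (∑ k ∈ range L, x k * (k+1)) * ∑ k ∈ range L, x k * S2 k
      = ∑ k ∈ range L, ∑ j ∈ range L, (x k * x j) * (3 * ((k+1) * S2 j)) := by
    rw [mul_assoc, Finset.sum_mul_sum, Finset.mul_sum]
    refine Finset.sum_congr rfl fun k _ => ?_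
    rw [Finset.mul_sum]
    exact Finset.sum_congr rfl fun j _ => by ring
  have hR2 : 3 * (∑ k ∈ range L, x k * (k+1)) * ∑ k ∈ range L, x k * S2 k
      = ∑ k ∈ range L, ∑ j ∈ range L, (x k * x j) * (3 * ((j+1) * S2 k)) := by
    rw [hR1, Finset.sum_comm]
    exact Finset.sum_congr rfl fun k _ => Finset.sum_congr rfl fun j _ => by ring
  have hR : 2 * (3 * (∑ k ∈ range L, x k * (k+1)) * ∑ k ∈ range L, x k * S2 k)
      = ∑ k ∈ range L, ∑ j ∈ range L,
          (x k * x j) * (3 * ((k+1) * S2 j) + 3 * ((j+1) * S2 k)) := by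
    have : 2 * (3 * (∑ k ∈ range L, x k * (k+1)) * ∑ k ∈ range L, x k * S2 k)
        = 3 * (∑ k ∈ range L, x k * (k+1)) * (∑ k ∈ range L, x k * S2 k)
          + 3 * (∑ k ∈ range L, x k * (k+1)) * (∑ k ∈ range L, x k * S2 k) := by ring
    rw [this]
    nth_rewrite 1 [hR1]
    nth_rewrite 1 [hR2]
    rw [← Finset.sum_add_distrib]
    refine Finset.sum_congr rfl fun k _ => ?_
    rw [← Finset.sum_add_distrib]
    exact Finset.sum_congr rfl fun j _ => by ring
  have hmain : 2 * (4 * (∑ k ∈ range L, x k * S1 k) ^ 2)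
      ≤ 2 * (3 * (∑ k ∈ range L, x k * (k+1)) * ∑ k ∈ range L, x k * S2 k) := by
    rw [hL, hR]
    refine Finset.sum_le_sum fun k _ => Finset.sum_le_sum fun j _ => ?_
    exact Nat.mul_le_mul_left _ (pointwise_ineq k j)
  show 4 * (∑ k ∈ range L, x k * S1 k) ^ 2
      ≤ 3 * (∑ k ∈ range L, x k * (k+1)) * ∑ k ∈ range L, x k * S2 k
  omega

lemma key_ineq (hs : l.Pairwise (· ≥ ·)) :
    4 * (∑ i ∈ range l.length, i * l.getD i 0) ^ 2
      ≤ 3 * l.sum * ∑ i ∈ range l.length, i ^ 2 * l.getD i 0 := by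
  set L := l.length
  have hT := layer_sum l hs (fun i => i)
  have hM := layer_sum l hs (fun i => i ^ 2)
  have hn : l.sum = ∑ k ∈ range L, dd l k * (k+1) := by
    rw [list_sum_eq_range]
    have := layer_sum l hs (fun _ => 1)
    simpa using this
  rw [hT, hM, hn]
  exact quad_ineq L (dd l)

lemma Mpart_zero (hpos : ∀ x ∈ l, 0 < x) (h1 : l.sum ≤ 1) : Mpart l = 0 := by
  match l with
  | [] => rfl
  | [x] => simp [Mpart]
  | x :: y :: t =>
      exfalso
      have hx := hpos x (by simp)
      have hy := hpos y (by simp)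
      simp only [List.sum_cons] at h1
      omega

end NatSide

lemma moment {n : ℕ} (l : List ℕ) (a : Fin n → ℝ)
    (h : (Finset.univ.val.map a) = partMultiset l) (g : ℝ → ℝ) :
    ∑ i, g (a i) = ∑ i ∈ range l.length, (l.getD i 0 : ℝ) * g i := by
  have h1 : ∑ i, g (a i) = ((Finset.univ.val.map a).map g).sum := by
    rw [Multiset.map_map, Finset.sum]
    rfl
  rw [h1, h]
  rw [show ((partMultiset l).map g).sum
      = Multiset.sumAddMonoidHom ((Multiset.mapAddMonoidHom g) (partMultiset l)) from rfl,
    partMultiset, map_sum, map_sum]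
  refine Finset.sum_congr rfl fun i _ => ?_
  show ((Multiset.replicate (l.getD i 0) ((i:ℕ):ℝ)).map g).sum = _
  rw [Multiset.map_replicate, Multiset.sum_replicate, nsmul_eq_mul]

set_option maxHeartbeats 1000000 in
/-- If `λ` and `μ` are partitions of `n`, `A` consists of `λᵢ` copies of `i-1`, and
`B` consists of `μᵢ` copies of `i-1`, then `Var[∑ aᵢ b_{π(i)}] ≍ M(A)M(B)/n`. -/
theorem stmt4 :
    ∃ c C : ℝ, 0 < c ∧ 0 < C ∧
      ∀ (n : ℕ) (lam mu : List ℕ),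
        lam.Pairwise (· ≥ ·) → mu.Pairwise (· ≥ ·) →
        (∀ x ∈ lam, 0 < x) → (∀ x ∈ mu, 0 < x) →
        lam.sum = n → mu.sum = n →
        ∀ a b : Fin n → ℝ,
          Finset.univ.val.map a = partMultiset lam →
          Finset.univ.val.map b = partMultiset mu →
          c * ((Mpart lam * Mpart mu : ℕ) : ℝ) / n ≤
              permVar (fun π => ∑ i, a i * b (π i)) ∧
            permVar (fun π => ∑ i, a i * b (π i)) ≤
              C * ((Mpart lam * Mpart mu : ℕ) : ℝ) / n := by
  refine ⟨1/16, 2, by norm_num, by norm_num, ?_⟩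
  intro n lam mu hslam hsmu hposlam hposmu hsuml hsumm a b ha hb
  by_cases hn : 2 ≤ n
  · -- main case
    have hn0 : (0:ℝ) < n := by
      have : 0 < n := by omega
      exact_mod_cast this
    have hn1 : (1:ℝ) < n := by exact_mod_cast hn
    -- moments
    have hA1 : ∑ i, a i = ((∑ i ∈ range lam.length, i * lam.getD i 0 : ℕ) : ℝ) := by
      rw [show (∑ i, a i) = ∑ i, (fun x => x) (a i) from rfl, moment lam a ha (fun x => x)]
      push_cast
      exact Finset.sum_congr rfl fun i _ => by ring
    have hA2 : ∑ i, a i ^ 2 = ((Mpart lam : ℕ) : ℝ) := by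
      rw [show (∑ i, a i ^ 2) = ∑ i, (fun x => x ^ 2) (a i) from rfl,
        moment lam a ha (fun x => x ^ 2), Mpart]
      push_cast
      exact Finset.sum_congr rfl fun i _ => by ring
    have hB1 : ∑ i, b i = ((∑ i ∈ range mu.length, i * mu.getD i 0 : ℕ) : ℝ) := by
      rw [show (∑ i, b i) = ∑ i, (fun x => x) (b i) from rfl, moment mu b hb (fun x => x)]
      push_cast
      exact Finset.sum_congr rfl fun i _ => by ring
    have hB2 : ∑ i, b i ^ 2 = ((Mpart mu : ℕ) : ℝ) := by
      rw [show (∑ i, b i ^ 2) = ∑ i, (fun x => x ^ 2) (b i) from rfl,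
        moment mu b hb (fun x => x ^ 2), Mpart]
      push_cast
      exact Finset.sum_congr rfl fun i _ => by ring
    set Ta : ℕ := ∑ i ∈ range lam.length, i * lam.getD i 0 with hTa
    set Tb : ℕ := ∑ i ∈ range mu.length, i * mu.getD i 0 with hTb
    have hkA : 4 * ((Ta:ℝ))^2 ≤ 3 * (n:ℝ) * (Mpart lam : ℝ) := by
      have := key_ineq lam hslam
      rw [hsuml] at this
      exact_mod_cast this
    have hkB : 4 * ((Tb:ℝ))^2 ≤ 3 * (n:ℝ) * (Mpart mu : ℝ) := by
      have := key_ineq mu hsmu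
      rw [hsumm] at this
      exact_mod_cast this
    rw [permVar_formula hn a b, hA1, hA2, hB1, hB2]
    set Sa : ℝ := (Mpart lam : ℝ) - (Ta:ℝ)^2 / n with hSa
    set Sb : ℝ := (Mpart mu : ℝ) - (Tb:ℝ)^2 / n with hSb
    have hMa0 : (0:ℝ) ≤ (Mpart lam : ℝ) := Nat.cast_nonneg _
    have hMb0 : (0:ℝ) ≤ (Mpart mu : ℝ) := Nat.cast_nonneg _
    have hSa_lb : (Mpart lam : ℝ) / 4 ≤ Sa := by
      have h : (Ta:ℝ)^2 / n ≤ 3 * (Mpart lam : ℝ) / 4 := by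
        rw [div_le_div_iff₀ hn0 (by norm_num : (0:ℝ) < 4)]
        nlinarith [hkA]
      rw [hSa]
      linarith
    have hSa_ub : Sa ≤ (Mpart lam : ℝ) := by
      rw [hSa]
      have : (0:ℝ) ≤ (Ta:ℝ)^2 / n := by positivity
      linarith
    have hSb_lb : (Mpart mu : ℝ) / 4 ≤ Sb := by
      have h : (Tb:ℝ)^2 / n ≤ 3 * (Mpart mu : ℝ) / 4 := by
        rw [div_le_div_iff₀ hn0 (by norm_num : (0:ℝ) < 4)]
        nlinarith [hkB]
      rw [hSb]
      linarith
    have hSb_ub : Sb ≤ (Mpart mu : ℝ) := by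
      rw [hSb]
      have : (0:ℝ) ≤ (Tb:ℝ)^2 / n := by positivity
      linarith
    have hSa0 : (0:ℝ) ≤ Sa := le_trans (by positivity) hSa_lb
    have hSb0 : (0:ℝ) ≤ Sb := le_trans (by positivity) hSb_lb
    have hd : (0:ℝ) < (n:ℝ) - 1 := by linarith
    push_cast
    constructor
    · rw [div_le_div_iff₀ hn0 hd]
      have hp : (Mpart lam : ℝ) / 4 * ((Mpart mu : ℝ) / 4) ≤ Sa * Sb :=
        mul_le_mul hSa_lb hSb_lb (by positivity) hSa0
      nlinarith [mul_le_mul_of_nonneg_right hp hn0.le, mul_nonneg hMa0 hMb0]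
    · rw [div_le_div_iff₀ hd hn0]
      have hp : Sa * Sb ≤ (Mpart lam : ℝ) * (Mpart mu : ℝ) :=
        mul_le_mul hSa_ub hSb_ub hSb0 hMa0
      have hn2 : (0:ℝ) ≤ (n:ℝ) - 2 := by
        have : (2:ℝ) ≤ (n:ℝ) := by exact_mod_cast hn
        linarith
      nlinarith [mul_le_mul_of_nonneg_right hp hn0.le,
        mul_nonneg (mul_nonneg hMa0 hMb0) hn2]
  · -- degenerate case n ≤ 1
    have hn1 : n ≤ 1 := by omega
    have hVar : permVar (fun π => ∑ i, a i * b (π i)) = 0 :=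
      permVar_of_subsingleton hn1 _
    have hMa : Mpart lam = 0 := Mpart_zero lam hposlam (by omega)
    rw [hVar, hMa]
    simp
end

section
/- Let m ≤ n be positive integers and let 0 < δ, p < 1 be real numbers such that pn is an integer. If S is a uniformly random pn-element subset of {1,…,n}, then P[|S ∩ {1,…,m}| ≤ (1−δ)pm] ≤ (n+1)·e^{−δ²pm/2}. -/
open Finset

/-- Cardinality of the set of the first `m` elements of `Fin n`. -/
private lemma stmt7_card_M {n m : ℕ} (hmn : m ≤ n) :
    (Finset.univ.filter fun i : Fin n => (i : ℕ) < m).card = m := by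
  have himg : (Finset.univ.filter fun i : Fin n => (i : ℕ) < m).image Fin.val
      = Finset.range m := by
    ext a
    simp only [Finset.mem_image, Finset.mem_filter, Finset.mem_univ, true_and, Finset.mem_range]
    constructor
    · rintro ⟨i, hi, rfl⟩; exact hi
    · intro ha; exact ⟨⟨a, lt_of_lt_of_le ha hmn⟩, ha, rfl⟩
  have hc := Finset.card_image_of_injective
    (Finset.univ.filter fun i : Fin n => (i : ℕ) < m) Fin.val_injective
  rw [himg, Finset.card_range] at hc
  exact hc.symm

/-- Double counting: the number of `k`-subsets missing at least `b` of the first `m`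
elements, times `C(b,r)`, is at most `C(m,r) * C(n-r,k)`. -/
private lemma stmt7_count_le {n m k r b : ℕ} (F : Finset (Finset (Fin n)))
    (hF : ∀ S ∈ F, S.card = k ∧
      b ≤ ((Finset.univ.filter fun i : Fin n => (i : ℕ) < m) \ S).card)
    (hmn : m ≤ n) :
    F.card * b.choose r ≤ m.choose r * (n - r).choose k := by
  classical
  set M : Finset (Fin n) := Finset.univ.filter fun i : Fin n => (i : ℕ) < m with hM
  have hsub : F ⊆ Finset.powersetCard k (Finset.univ : Finset (Fin n)) := by
    intro S hS
    exact Finset.mem_powersetCard.mpr ⟨Finset.subset_univ S, (hF S hS).1⟩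
  calc F.card * b.choose r = ∑ _S ∈ F, b.choose r := by
        rw [Finset.sum_const, smul_eq_mul]
    _ ≤ ∑ S ∈ F, ((M \ S).card).choose r := by
        apply Finset.sum_le_sum
        intro S hS
        exact Nat.choose_le_choose r (hF S hS).2
    _ ≤ ∑ S ∈ Finset.powersetCard k (Finset.univ : Finset (Fin n)),
          ((M \ S).card).choose r := Finset.sum_le_sum_of_subset hsub
    _ = ∑ S ∈ Finset.powersetCard k (Finset.univ : Finset (Fin n)),
          ((Finset.powersetCard r M).filter fun T => Disjoint T S).card := by
        apply Finset.sum_congr rfl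
        intro S _
        rw [← Finset.card_powersetCard]
        congr 1
        ext T
        simp only [Finset.mem_powersetCard, Finset.mem_filter, Finset.subset_sdiff]
        tauto
    _ = ∑ S ∈ Finset.powersetCard k (Finset.univ : Finset (Fin n)),
          ∑ T ∈ Finset.powersetCard r M, if Disjoint T S then 1 else 0 := by
        apply Finset.sum_congr rfl
        intro S _
        rw [Finset.card_filter]
    _ = ∑ T ∈ Finset.powersetCard r M,
          ∑ S ∈ Finset.powersetCard k (Finset.univ : Finset (Fin n)),
            if Disjoint T S then 1 else 0 := Finset.sum_comm
    _ = ∑ T ∈ Finset.powersetCard r M, (n - r).choose k := by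
        apply Finset.sum_congr rfl
        intro T hT
        have hTcard : T.card = r := (Finset.mem_powersetCard.mp hT).2
        rw [← Finset.card_filter]
        have hq : (Finset.powersetCard k (Finset.univ : Finset (Fin n))).filter
            (fun S => Disjoint T S)
            = Finset.powersetCard k ((Finset.univ : Finset (Fin n)) \ T) := by
          ext S
          simp only [Finset.mem_filter, Finset.mem_powersetCard, Finset.subset_sdiff]
          constructor
          · rintro ⟨⟨_, hSk⟩, hd⟩; exact ⟨⟨Finset.subset_univ S, hd.symm⟩, hSk⟩
          · rintro ⟨⟨_, hd⟩, hSk⟩; exact ⟨⟨Finset.subset_univ S, hSk⟩, hd.symm⟩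
        rw [hq, Finset.card_powersetCard]
        congr 1
        rw [Finset.card_sdiff_of_subset (Finset.subset_univ T), hTcard, Finset.card_univ,
          Fintype.card_fin]
    _ = m.choose r * (n - r).choose k := by
        rw [Finset.sum_const, smul_eq_mul, Finset.card_powersetCard, hM, stmt7_card_M hmn]

/-- `C(n-r, k) ≤ (1-p)^r * C(n,k)` where `p = k/n`. -/
private lemma stmt7_choose_sub_le {n k : ℕ} {p : ℝ} (hk : (k : ℝ) = p * n) (hk1 : 1 ≤ k)
    (hp0 : 0 ≤ p) (hp1 : p ≤ 1) (hkn : k ≤ n) (r : ℕ) :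
    ((n - r).choose k : ℝ) ≤ (1 - p) ^ r * (n.choose k) := by
  have h1p : (0:ℝ) ≤ 1 - p := by linarith
  have step : ∀ t : ℕ, t ≤ n → ((t - 1).choose k : ℝ) ≤ (1 - p) * (t.choose k) := by
    intro t ht
    match t with
    | 0 =>
      simp only [Nat.zero_sub, Nat.choose_eq_zero_of_lt hk1, Nat.cast_zero]
      positivity
    | (s+1) =>
      simp only [Nat.add_sub_cancel]
      by_cases hks : k ≤ s
      · have hid := Nat.choose_mul_succ_eq s k
        have hidR : ((s.choose k : ℝ)) * ((s:ℝ) + 1)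
            = ((s+1).choose k : ℝ) * (((s:ℝ) + 1) - k) := by
          have hks1 : k ≤ s + 1 := le_trans hks (Nat.le_succ s)
          have := congrArg (fun x : ℕ => (x : ℝ)) hid
          push_cast [Nat.cast_sub hks1] at this
          push_cast
          linarith [this]
        have hpn : p * ((s:ℝ) + 1) ≤ k := by
          rw [hk]
          have : ((s:ℝ) + 1) ≤ (n:ℝ) := by exact_mod_cast ht
          nlinarith
        have hpos : (0:ℝ) ≤ ((s+1).choose k : ℝ) := Nat.cast_nonneg _
        nlinarith
      · have hlt : s < k := not_le.mp hks
        simp only [Nat.choose_eq_zero_of_lt hlt, Nat.cast_zero]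
        positivity
  induction r with
  | zero => simp
  | succ r ih =>
    have hstep : n - (r+1) = (n - r) - 1 := by omega
    rw [hstep]
    calc ((n - r - 1).choose k : ℝ) ≤ (1 - p) * ((n - r).choose k) :=
          step _ (Nat.sub_le n r)
      _ ≤ (1 - p) * ((1 - p) ^ r * (n.choose k)) := by
          apply mul_le_mul_of_nonneg_left ih h1p
      _ = (1 - p) ^ (r+1) * (n.choose k) := by ring

/-- `C(m,r) * (b)_r = C(b,r) * (m)_r` as reals. -/
private lemma stmt7_choose_prod_eq {m b r : ℕ} (hrb : r ≤ b) (hbm : b ≤ m) :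
    (m.choose r : ℝ) * ∏ i ∈ Finset.range r, ((b : ℝ) - i)
      = (b.choose r : ℝ) * ∏ i ∈ Finset.range r, ((m : ℝ) - i) := by
  have hnat : m.choose r * b.descFactorial r = b.choose r * m.descFactorial r := by
    rw [Nat.descFactorial_eq_factorial_mul_choose, Nat.descFactorial_eq_factorial_mul_choose]
    ring
  have hcast : ∀ t : ℕ, r ≤ t →
      (t.descFactorial r : ℝ) = ∏ i ∈ Finset.range r, ((t : ℝ) - i) := by
    intro t hrt
    rw [Nat.descFactorial_eq_prod_range, Nat.cast_prod]
    apply Finset.prod_congr rfl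
    intro i hi
    have hit : i ≤ t := le_trans (le_of_lt (Finset.mem_range.mp hi)) hrt
    rw [Nat.cast_sub hit]
  have := congrArg (fun x : ℕ => (x : ℝ)) hnat
  push_cast at this
  rw [hcast b hrb, hcast m (le_trans hrb hbm)] at this
  exact this

/-- `d + (1-d) log(1-d) ≥ d²/2` for `0 ≤ d < 1`. -/
private lemma stmt7_h_ge {d : ℝ} (hd0 : 0 ≤ d) (hd1 : d < 1) :
    d ^ 2 / 2 ≤ d + (1 - d) * Real.log (1 - d) := by
  have hy0 : 0 < 1 - d := by linarith
  set F : ℝ → ℝ := fun x => 1 - x + x * Real.log x - (1 - x) ^ 2 / 2 with hF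
  have hderiv : ∀ x : ℝ, 0 < x → HasDerivAt F (Real.log x + (1 - x)) x := by
    intro x hx
    have h1 : HasDerivAt (fun y : ℝ => y * Real.log y) (Real.log x + 1) x :=
      Real.hasDerivAt_mul_log (ne_of_gt hx)
    have h2 : HasDerivAt (fun y : ℝ => 1 - y) (-1) x := by
      simpa using (hasDerivAt_id x).const_sub 1
    have h3 : HasDerivAt (fun y : ℝ => (1 - y) ^ 2 / 2) (-(1 - x)) x := by
      have h4 := (h2.pow 2).div_const 2
      refine h4.congr_deriv ?_
      push_cast
      ring
    have := (h2.add h1).sub h3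
    refine this.congr_deriv ?_
    ring
  have hanti : AntitoneOn F (Set.Icc (1 - d) 1) := by
    apply antitoneOn_of_deriv_nonpos (convex_Icc (1 - d) 1)
    · intro x hx
      exact (hderiv x (lt_of_lt_of_le hy0 hx.1)).continuousAt.continuousWithinAt
    · intro x hx
      rw [interior_Icc] at hx
      exact (hderiv x (lt_trans hy0 hx.1)).differentiableAt.differentiableWithinAt
    · intro x hx
      rw [interior_Icc] at hx
      have hxpos : 0 < x := lt_trans hy0 hx.1
      rw [(hderiv x hxpos).deriv]
      have := Real.log_le_sub_one_of_pos hxpos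
      linarith
  have hmem1 : (1 : ℝ) ∈ Set.Icc (1 - d) 1 := Set.mem_Icc.mpr ⟨by linarith, le_refl 1⟩
  have hmemy : (1 - d) ∈ Set.Icc (1 - d) 1 := Set.mem_Icc.mpr ⟨le_refl _, by linarith⟩
  have h10 : F 1 = 0 := by simp [hF]
  have := hanti hmemy hmem1 (by linarith)
  rw [h10] at this
  have hFy : F (1 - d) = d + (1 - d) * Real.log (1 - d) - d ^ 2 / 2 := by
    simp only [hF]
    ring_nf
  rw [hFy] at this
  linarith

private lemma stmt7_numeric {δ μ s p : ℝ} (hδ0 : 0 < δ) (hμ : 0 < μ)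
    (hs0 : 0 ≤ s) (hs1 : δ * μ - 1 ≤ s) (hp0 : 0 < p) :
    δ ^ 2 * p * μ / 2 - δ * p ≤ p * μ * ((s / μ) ^ 2 / 2) := by
  have hmain : δ ^ 2 * μ - 2 * δ ≤ μ * ((s / μ) ^ 2) := by
    have hd2 : μ * ((s / μ) ^ 2) = s ^ 2 / μ := by field_simp
    rw [hd2, le_div_iff₀ hμ]
    by_cases hcase : 1 ≤ δ * μ
    · have h0 : (0:ℝ) ≤ δ * μ - 1 := by linarith
      have h1 : (δ * μ - 1) ^ 2 ≤ s ^ 2 := pow_le_pow_left₀ h0 hs1 2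
      nlinarith only [h1, hμ, hδ0]
    · push_neg at hcase
      have h2 : δ * (δ * μ) < δ * 1 := mul_lt_mul_of_pos_left hcase hδ0
      have h3 : δ ^ 2 * μ - 2 * δ < 0 := by nlinarith only [h2, hδ0]
      nlinarith only [sq_nonneg s, mul_neg_of_neg_of_pos h3 hμ]
  nlinarith only [mul_le_mul_of_nonneg_left hmain (le_of_lt hp0)]

/-- The key KL-type inequality. -/
private lemma stmt7_key_ineq {p δ μ s : ℝ} (hp0 : 0 < p) (hp1 : p < 1) (hδ0 : 0 < δ)
    (hδ1 : δ < 1) (hμ : 0 < μ) (hs0 : 0 ≤ s) (hsμ : s < μ)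
    (hs1 : δ * μ - 1 ≤ s) (hs2 : s ≤ δ * μ) :
    s * Real.log (1 - p) + (μ * Real.log μ - (μ - s) * Real.log (μ - s) - s)
      - ((μ - p * (μ - s)) * Real.log (μ - p * (μ - s))
        - ((μ - p * (μ - s)) - s) * Real.log ((μ - p * (μ - s)) - s) - s)
      ≤ δ * p - δ ^ 2 * p * μ / 2 := by
  have h1p : (0:ℝ) < 1 - p := by linarith
  set K : ℝ := p * (μ - s) with hK
  set B : ℝ := μ - K with hB
  clear_value K B
  have hμs : 0 < μ - s := by linarith
  have hKpos : 0 < K := by rw [hK]; positivity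
  have hBpos : 0 < B := by nlinarith [hB, hK]
  have hBs : B - s = (1 - p) * (μ - s) := by rw [hB, hK]; ring
  have hBspos : 0 < B - s := by rw [hBs]; positivity
  -- rewrite log (B - s)
  have hlogBs : Real.log (B - s) = Real.log (1 - p) + Real.log (μ - s) := by
    rw [hBs, Real.log_mul (ne_of_gt h1p) (ne_of_gt hμs)]
  -- LHS = B log(1-p) + μ log μ - K log(μ-s) - B log B
  have hLHS : s * Real.log (1 - p) + (μ * Real.log μ - (μ - s) * Real.log (μ - s) - s)
      - (B * Real.log B - (B - s) * Real.log (B - s) - s)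
      = B * Real.log (1 - p) + μ * Real.log μ - K * Real.log (μ - s) - B * Real.log B := by
    rw [hlogBs]
    linear_combination Real.log (μ - s) * hB
  -- first term bound : B * (log B - log(1-p) - log μ) ≥ p * s
  have hX : (1 - p) * μ ≤ B := by rw [hB, hK]; nlinarith
  have hfirst : p * s ≤ B * (Real.log B - Real.log (1 - p) - Real.log μ) := by
    have hXpos : 0 < (1 - p) * μ := by positivity
    have hlog : Real.log ((1 - p) * μ) ≤ Real.log B - (1 - ((1 - p) * μ) / B) := by
      have h2 : Real.log (((1 - p) * μ) / B) ≤ ((1 - p) * μ) / B - 1 :=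
        Real.log_le_sub_one_of_pos (by positivity)
      rw [Real.log_div (ne_of_gt hXpos) (ne_of_gt hBpos)] at h2
      linarith
    have hlogmul : Real.log ((1 - p) * μ) = Real.log (1 - p) + Real.log μ :=
      Real.log_mul (ne_of_gt h1p) (ne_of_gt hμ)
    have hdiv : ((1 - p) * μ) / B ≤ 1 := by
      rw [div_le_one hBpos]; exact hX
    have h3 : Real.log (1 - p) + Real.log μ + (1 - ((1 - p) * μ) / B) ≤ Real.log B := by
      rw [← hlogmul]; linarith
    have h4 : B * (1 - ((1 - p) * μ) / B) ≤ B * (Real.log B - Real.log (1 - p) - Real.log μ) :=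
      mul_le_mul_of_nonneg_left (by linarith) (le_of_lt hBpos)
    have h5 : B * (1 - ((1 - p) * μ) / B) = B - (1 - p) * μ := by
      field_simp
    have h6 : B - (1 - p) * μ = p * s := by rw [hB, hK]; ring
    calc p * s = B - (1 - p) * μ := h6.symm
      _ = B * (1 - ((1 - p) * μ) / B) := h5.symm
      _ ≤ B * (Real.log B - Real.log (1 - p) - Real.log μ) := h4
  -- second: K * (log(μ-s) - log μ) = p μ (1-d) log(1-d) with d = s/μ
  set d : ℝ := s / μ with hd
  clear_value d
  have hd0 : 0 ≤ d := by rw [hd]; positivity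
  have hd1 : d < 1 := by rw [hd, div_lt_one hμ]; exact hsμ
  have h1d : 1 - d = (μ - s) / μ := by rw [hd]; field_simp
  have hlog1d : Real.log (1 - d) = Real.log (μ - s) - Real.log μ := by
    rw [h1d, Real.log_div (ne_of_gt hμs) (ne_of_gt hμ)]
  have hkey : d ^ 2 / 2 ≤ d + (1 - d) * Real.log (1 - d) := stmt7_h_ge hd0 hd1
  -- combine: B(log B - log(1-p) - log μ) + K(log μ - log(μ-s)) ≥ p s + p μ (d+(1-d)log(1-d)) ...
  have hKval : K = p * μ * (1 - d) := by rw [hK, h1d]; field_simp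
  have hsd : s = d * μ := by rw [hd]; field_simp
  -- target transformation
  have hgoal : B * Real.log (1 - p) + μ * Real.log μ - K * Real.log (μ - s) - B * Real.log B
      = -(B * (Real.log B - Real.log (1 - p) - Real.log μ)
          + K * (Real.log (μ - s) - Real.log μ)) := by
    have hμBK : μ = B + K := by rw [hB]; ring
    linear_combination Real.log μ * hμBK
  have hsecond : K * (Real.log (μ - s) - Real.log μ) = p * μ * ((1 - d) * Real.log (1 - d)) := by
    rw [hKval, ← hlog1d]; ring
  have h7 := mul_le_mul_of_nonneg_left hkey (by positivity : (0:ℝ) ≤ p * μ)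
  have h8 : p * μ * d = p * s := by rw [hsd]; ring
  have hfull : p * μ * (d ^ 2 / 2)
      ≤ B * (Real.log B - Real.log (1 - p) - Real.log μ)
        + K * (Real.log (μ - s) - Real.log μ) := by
    rw [hsecond]
    linarith only [hfirst, h7, h8]
  have hfinal : δ ^ 2 * p * μ / 2 - δ * p ≤ p * μ * (d ^ 2 / 2) := by
    rw [hd]
    exact stmt7_numeric hδ0 hμ hs0 hs1 hp0
  calc s * Real.log (1 - p) + (μ * Real.log μ - (μ - s) * Real.log (μ - s) - s)
      - (B * Real.log B - (B - s) * Real.log (B - s) - s)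
      = B * Real.log (1 - p) + μ * Real.log μ - K * Real.log (μ - s) - B * Real.log B := hLHS
    _ = -(B * (Real.log B - Real.log (1 - p) - Real.log μ)
          + K * (Real.log (μ - s) - Real.log μ)) := hgoal
    _ ≤ -(p * μ * (d ^ 2 / 2)) := by linarith only [hfull]
    _ ≤ δ * p - δ ^ 2 * p * μ / 2 := by linarith only [hfinal]

/-- Sum of monotone log-difference bounded by the explicit integral. -/
private lemma stmt7_sum_log_le {μ B : ℝ} (r : ℕ) (hBr : (r : ℝ) < B) (hBμ : B ≤ μ) :
    ∑ i ∈ Finset.range r, (Real.log (μ - i) - Real.log (B - i))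
      ≤ (μ * Real.log μ - (μ - r) * Real.log (μ - r) - r)
        - (B * Real.log B - (B - r) * Real.log (B - r) - r) := by
  have hB0 : 0 < B := lt_of_le_of_lt (Nat.cast_nonneg r) hBr
  have hμ0 : 0 < μ := lt_of_lt_of_le hB0 hBμ
  have hBrpos : 0 < B - r := by linarith
  have hμrpos : 0 < μ - r := by linarith
  have hmono : MonotoneOn (fun x : ℝ => Real.log (μ - x) - Real.log (B - x))
      (Set.Icc (0:ℝ) (0 + (r:ℕ))) := by
    intro x hx y hy hxy
    simp only [Set.mem_Icc, zero_add] at hx hy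
    have hBy : 0 < B - y := by linarith [hy.2]
    have hBx : 0 < B - x := by linarith [hx.2]
    have hμy : 0 < μ - y := by linarith [hy.2]
    have hμx : 0 < μ - x := by linarith [hx.2]
    dsimp only
    rw [← sub_nonneg]
    have hineq : (μ - x) * (B - y) ≤ (μ - y) * (B - x) := by nlinarith
    have hlog : Real.log ((μ - x) * (B - y)) ≤ Real.log ((μ - y) * (B - x)) :=
      Real.log_le_log (by positivity) hineq
    rw [Real.log_mul (ne_of_gt hμx) (ne_of_gt hBy),
      Real.log_mul (ne_of_gt hμy) (ne_of_gt hBx)] at hlog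
    linarith
  have hsum := hmono.sum_le_integral
  simp only [zero_add] at hsum
  have hint1 : IntervalIntegrable (fun x => Real.log (μ - x)) MeasureTheory.volume 0 (r:ℝ) := by
    apply ContinuousOn.intervalIntegrable
    apply ContinuousOn.log
    · exact (continuous_const.sub continuous_id).continuousOn
    · intro x hx
      rw [Set.uIcc_of_le (by positivity : (0:ℝ) ≤ (r:ℝ))] at hx
      intro hcon
      nlinarith [hx.1, hx.2]
  have hint2 : IntervalIntegrable (fun x => Real.log (B - x)) MeasureTheory.volume 0 (r:ℝ) := by
    apply ContinuousOn.intervalIntegrable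
    apply ContinuousOn.log
    · exact (continuous_const.sub continuous_id).continuousOn
    · intro x hx
      rw [Set.uIcc_of_le (by positivity : (0:ℝ) ≤ (r:ℝ))] at hx
      intro hcon
      nlinarith [hx.1, hx.2]
  have hI1 : ∫ x in (0:ℝ)..(r:ℝ), Real.log (μ - x)
      = μ * Real.log μ - (μ - r) * Real.log (μ - r) - r := by
    rw [intervalIntegral.integral_comp_sub_left (fun x => Real.log x) μ, sub_zero]
    rw [integral_log]
    ring
  have hI2 : ∫ x in (0:ℝ)..(r:ℝ), Real.log (B - x)
      = B * Real.log B - (B - r) * Real.log (B - r) - r := by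
    rw [intervalIntegral.integral_comp_sub_left (fun x => Real.log x) B, sub_zero]
    rw [integral_log]
    ring
  calc ∑ i ∈ Finset.range r, (Real.log (μ - i) - Real.log (B - i))
      ≤ ∫ x in (0:ℝ)..(r:ℝ), (Real.log (μ - x) - Real.log (B - x)) := hsum
    _ = (∫ x in (0:ℝ)..(r:ℝ), Real.log (μ - x)) - ∫ x in (0:ℝ)..(r:ℝ), Real.log (B - x) :=
        intervalIntegral.integral_sub hint1 hint2
    _ = (μ * Real.log μ - (μ - r) * Real.log (μ - r) - r)
        - (B * Real.log B - (B - r) * Real.log (B - r) - r) := by rw [hI1, hI2]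

/-- If `S` is a uniformly random `pn`-element subset of `{1,…,n}` (modelled by `Fin n`,
with `{1,…,m}` corresponding to the first `m` elements), then
`P[|S ∩ [m]| ≤ (1-δ)pm] ≤ (n+1)·exp(-δ²pm/2)`. -/
theorem stmt7 (n m : ℕ) (hm : 0 < m) (hmn : m ≤ n) (δ p : ℝ)
    (hδ0 : 0 < δ) (hδ1 : δ < 1) (hp0 : 0 < p) (hp1 : p < 1)
    (k : ℕ) (hk : (k : ℝ) = p * n) :
    (Nat.card {S : Finset (Fin n) // S.card = k ∧
        (((S.filter fun i : Fin n => (i : ℕ) < m).card : ℝ) ≤ (1 - δ) * p * m)} : ℝ) /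
      (n.choose k : ℝ) ≤ (n + 1 : ℝ) * Real.exp (-δ ^ 2 * p * m / 2) := by
  classical
  have hn0 : 0 < n := lt_of_lt_of_le hm hmn
  have hnR : (0:ℝ) < n := by exact_mod_cast hn0
  have hmR : (0:ℝ) < m := by exact_mod_cast hm
  -- basic facts about k, n
  have hk0 : 0 < k := by
    by_contra h
    push_neg at h
    interval_cases k
    simp only [Nat.cast_zero] at hk
    nlinarith
  have hkn : k < n := by
    by_contra h
    push_neg at h
    have : (n:ℝ) ≤ (k:ℝ) := by exact_mod_cast h
    nlinarith
  have hn2 : 2 ≤ n := by omega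
  -- set up the counting quantities
  set M : Finset (Fin n) := Finset.univ.filter fun i : Fin n => (i : ℕ) < m with hM
  set P : Finset (Fin n) → Prop := fun S => S.card = k ∧
      (((S.filter fun i : Fin n => (i : ℕ) < m).card : ℝ) ≤ (1 - δ) * p * m) with hP
  set F : Finset (Finset (Fin n)) := Finset.univ.filter P with hFdef
  clear_value M F
  have hcard : (Nat.card {S : Finset (Fin n) // P S} : ℝ) = (F.card : ℝ) := by
    rw [hFdef]
    norm_cast
    rw [Nat.card_eq_fintype_card]
    convert Fintype.card_subtype P
  set A : ℕ := ⌊(1 - δ) * p * m⌋₊ with hA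
  set b : ℕ := m - A with hb
  set r : ℕ := ⌊δ * (m:ℝ)⌋₊ with hr
  clear_value A b r
  have h1δp : 0 < (1 - δ) * p := by nlinarith
  have hApm : (A : ℝ) ≤ (1 - δ) * p * m := by
    rw [hA]; exact Nat.floor_le (by positivity)
  have h1δp1 : (1 - δ) * p < 1 := by nlinarith
  have hAm : (A : ℝ) < m := by
    have h2 : (1 - δ) * p * m < 1 * m := mul_lt_mul_of_pos_right h1δp1 hmR
    linarith
  have hAmnat : A < m := by exact_mod_cast (by exact_mod_cast hAm : (A:ℝ) < (m:ℝ))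
  have hbR : (b : ℝ) = (m : ℝ) - A := by
    rw [hb]; push_cast [Nat.cast_sub (le_of_lt hAmnat)]; ring
  have hrR : (r : ℝ) ≤ δ * m := by
    rw [hr]; exact Nat.floor_le (by positivity)
  have hrR' : δ * m - 1 ≤ (r : ℝ) := by
    have h := Nat.lt_floor_add_one (δ * (m:ℝ))
    rw [← hr] at h
    linarith
  have hrm : (r : ℝ) < m := by
    have h2 : δ * m < 1 * m := mul_lt_mul_of_pos_right hδ1 hmR
    linarith
  have hrmnat : r < m := by exact_mod_cast (by exact_mod_cast hrm : (r:ℝ) < (m:ℝ))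
  -- b' : the real lower bound for b
  set b' : ℝ := (1 - p) * m + p * r with hb'
  clear_value b'
  have hb'pos : 0 < b' - r := by
    have h2 : b' - r = (1 - p) * ((m:ℝ) - r) := by rw [hb']; ring
    rw [h2]; exact mul_pos (by linarith) (by linarith)
  have hb'b : b' ≤ (b : ℝ) := by
    rw [hbR, hb']
    have h3 : p * (r:ℝ) ≤ p * (δ * m) := mul_le_mul_of_nonneg_left hrR (le_of_lt hp0)
    linarith
  have hrb : (r : ℝ) < (b : ℝ) := by
    calc (r:ℝ) < b' := by linarith
      _ ≤ b := hb'b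
  have hrbnat : r ≤ b := by
    have : r < b := by exact_mod_cast hrb
    omega
  have hbm : b ≤ m := by omega
  -- Step 1: counting inequality
  have hFP : ∀ S ∈ F, S.card = k ∧ b ≤ (M \ S).card := by
    intro S hS
    rw [hFdef, Finset.mem_filter, hP] at hS
    obtain ⟨-, hSk, hScond⟩ := hS
    refine ⟨hSk, ?_⟩
    have hXA : (S.filter fun i : Fin n => (i : ℕ) < m).card ≤ A := by
      rw [hA]; exact Nat.le_floor hScond
    have hMS : S.filter (fun i : Fin n => (i : ℕ) < m) = M ∩ S := by
      ext x
      simp [hM, Finset.mem_filter, Finset.mem_inter, and_comm]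
    have hsplit : (M \ S).card + (M ∩ S).card = M.card := Finset.card_sdiff_add_card_inter M S
    have hMcard : M.card = m := by rw [hM]; exact stmt7_card_M hmn
    have hMScard : (M ∩ S).card ≤ A := by rw [← hMS]; exact hXA
    omega
  rw [hM] at hFP
  have hcount : F.card * b.choose r ≤ m.choose r * (n - r).choose k :=
    stmt7_count_le F hFP hmn
  -- Step 2-3: real inequalities
  have hchoosenk : (0:ℝ) < (n.choose k : ℝ) := by
    exact_mod_cast Nat.choose_pos (le_of_lt hkn)
  have hchoosebr : (0:ℝ) < (b.choose r : ℝ) := by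
    exact_mod_cast Nat.choose_pos hrbnat
  have hstep2 : ((n - r).choose k : ℝ) ≤ (1 - p) ^ r * (n.choose k) :=
    stmt7_choose_sub_le hk hk0 (le_of_lt hp0) (le_of_lt hp1) (le_of_lt hkn) r
  have hcountR : (F.card : ℝ) * (b.choose r : ℝ) ≤ (m.choose r : ℝ) * ((n - r).choose k : ℝ) := by
    exact_mod_cast hcount
  -- products
  set Pm : ℝ := ∏ i ∈ Finset.range r, ((m : ℝ) - i) with hPm
  set Pb : ℝ := ∏ i ∈ Finset.range r, ((b : ℝ) - i) with hPb
  clear_value Pm Pb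
  have hPbpos : 0 < Pb := by
    rw [hPb]
    apply Finset.prod_pos
    intro i hi
    have : (i:ℝ) < r := by exact_mod_cast Finset.mem_range.mp hi
    linarith
  have hprodid : (m.choose r : ℝ) * Pb = (b.choose r : ℝ) * Pm := by
    rw [hPm, hPb]; exact stmt7_choose_prod_eq hrbnat hbm
  -- Count ≤ (Pm/Pb) * (1-p)^r * C(n,k)
  have hmain1 : (F.card : ℝ) * (b.choose r : ℝ) * Pb
      ≤ (b.choose r : ℝ) * (Pm * ((1 - p) ^ r * (n.choose k))) := by
    calc (F.card : ℝ) * (b.choose r : ℝ) * Pb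
        ≤ ((m.choose r : ℝ) * ((n - r).choose k : ℝ)) * Pb := by
          apply mul_le_mul_of_nonneg_right hcountR (le_of_lt hPbpos)
      _ ≤ ((m.choose r : ℝ) * ((1 - p) ^ r * (n.choose k))) * Pb := by
          apply mul_le_mul_of_nonneg_right _ (le_of_lt hPbpos)
          exact mul_le_mul_of_nonneg_left hstep2 (Nat.cast_nonneg _)
      _ = ((m.choose r : ℝ) * Pb) * ((1 - p) ^ r * (n.choose k)) := by ring
      _ = ((b.choose r : ℝ) * Pm) * ((1 - p) ^ r * (n.choose k)) := by rw [hprodid]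
      _ = (b.choose r : ℝ) * (Pm * ((1 - p) ^ r * (n.choose k))) := by ring
  have hmain2 : (F.card : ℝ) ≤ (1 - p) ^ r * Pm / Pb * (n.choose k) := by
    have h1 : (F.card : ℝ) * Pb ≤ Pm * ((1 - p) ^ r * (n.choose k)) := by
      have h2 : (b.choose r : ℝ) * ((F.card : ℝ) * Pb)
          ≤ (b.choose r : ℝ) * (Pm * ((1 - p) ^ r * (n.choose k))) := by
        calc (b.choose r : ℝ) * ((F.card : ℝ) * Pb)
            = (F.card : ℝ) * (b.choose r : ℝ) * Pb := by ring
          _ ≤ (b.choose r : ℝ) * (Pm * ((1 - p) ^ r * (n.choose k))) := hmain1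
      exact le_of_mul_le_mul_left h2 hchoosebr
    rw [div_mul_eq_mul_div, le_div_iff₀ hPbpos]
    calc (F.card : ℝ) * Pb ≤ Pm * ((1 - p) ^ r * (n.choose k)) := h1
      _ = (1 - p) ^ r * Pm * (n.choose k) := by ring
  -- Step 4-6: bound (1-p)^r * Pm / Pb by exp
  have h1p : (0:ℝ) < 1 - p := by linarith
  have hfactor : ∀ i ∈ Finset.range r, (0:ℝ) < (b':ℝ) - i ∧ ((b:ℝ) - i) > 0 ∧ ((m:ℝ) - i) > 0 := by
    intro i hi
    have hir : (i:ℝ) < r := by exact_mod_cast Finset.mem_range.mp hi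
    refine ⟨by linarith, by linarith, by linarith⟩
  have hprod_le : (1 - p) ^ r * Pm / Pb
      ≤ ∏ i ∈ Finset.range r, ((1 - p) * (((m:ℝ) - i) / (b' - i))) := by
    have hEq : (1 - p) ^ r * Pm / Pb
        = ∏ i ∈ Finset.range r, ((1 - p) * (((m:ℝ) - i) / ((b:ℝ) - i))) := by
      rw [hPm, hPb, mul_div_assoc, ← Finset.prod_div_distrib,
        Finset.prod_mul_distrib, Finset.prod_const, Finset.card_range]
    rw [hEq]
    apply Finset.prod_le_prod
    · intro i hi
      obtain ⟨h1, h2, h3⟩ := hfactor i hi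
      positivity
    · intro i hi
      obtain ⟨h1, h2, h3⟩ := hfactor i hi
      apply mul_le_mul_of_nonneg_left _ (le_of_lt h1p)
      apply div_le_div_of_nonneg_left (le_of_lt h3) h1
      linarith [hb'b]
  have hexp : ∏ i ∈ Finset.range r, ((1 - p) * (((m:ℝ) - i) / (b' - i)))
      = Real.exp (∑ i ∈ Finset.range r,
          (Real.log (1 - p) + (Real.log ((m:ℝ) - i) - Real.log (b' - i)))) := by
    rw [Real.exp_sum]
    apply Finset.prod_congr rfl
    intro i hi
    obtain ⟨h1, h2, h3⟩ := hfactor i hi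
    rw [Real.exp_add, Real.exp_sub, Real.exp_log h1p, Real.exp_log h3, Real.exp_log h1]
  -- the sum bound
  have hsum_le : ∑ i ∈ Finset.range r,
      (Real.log (1 - p) + (Real.log ((m:ℝ) - i) - Real.log (b' - i)))
      ≤ δ * p - δ ^ 2 * p * m / 2 := by
    rw [Finset.sum_add_distrib, Finset.sum_const, Finset.card_range, nsmul_eq_mul]
    have hslog := stmt7_sum_log_le (μ := (m:ℝ)) (B := b') r (by linarith) (by
      rw [hb']
      have h3 : p * (r:ℝ) ≤ p * (m:ℝ) := mul_le_mul_of_nonneg_left (le_of_lt hrm) (le_of_lt hp0)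
      linarith)
    have hkey := stmt7_key_ineq (p := p) (δ := δ) (μ := (m:ℝ)) (s := (r:ℝ))
      hp0 hp1 hδ0 hδ1 hmR (Nat.cast_nonneg r) hrm hrR' hrR
    have hb'eq : b' = (m:ℝ) - p * ((m:ℝ) - r) := by rw [hb']; ring
    rw [← hb'eq] at hkey
    -- hkey : r log(1-p) + (...) - (...) ≤ δp - δ²pm/2 where the middle involves b'
    have : (b' - (r:ℝ)) = ((m:ℝ) - p * ((m:ℝ) - r)) - r := by rw [hb'eq]
    calc (r:ℝ) * Real.log (1 - p)
          + ∑ i ∈ Finset.range r, (Real.log ((m:ℝ) - i) - Real.log (b' - i))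
        ≤ (r:ℝ) * Real.log (1 - p)
          + (((m:ℝ) * Real.log m - ((m:ℝ) - r) * Real.log ((m:ℝ) - r) - r)
            - (b' * Real.log b' - (b' - r) * Real.log (b' - r) - r)) := by
          linarith [hslog]
      _ ≤ δ * p - δ ^ 2 * p * m / 2 := by
          have := hkey
          linarith
  -- Step 7: conclude
  have hfinal : (F.card : ℝ) ≤ (n.choose k : ℝ) * ((n + 1 : ℝ) * Real.exp (-δ ^ 2 * p * m / 2)) := by
    calc (F.card : ℝ) ≤ (1 - p) ^ r * Pm / Pb * (n.choose k) := hmain2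
      _ ≤ Real.exp (δ * p - δ ^ 2 * p * m / 2) * (n.choose k) := by
          apply mul_le_mul_of_nonneg_right _ (le_of_lt hchoosenk)
          calc (1 - p) ^ r * Pm / Pb
              ≤ ∏ i ∈ Finset.range r, ((1 - p) * (((m:ℝ) - i) / (b' - i))) := hprod_le
            _ = Real.exp (∑ i ∈ Finset.range r,
                (Real.log (1 - p) + (Real.log ((m:ℝ) - i) - Real.log (b' - i)))) := hexp
            _ ≤ Real.exp (δ * p - δ ^ 2 * p * m / 2) := Real.exp_le_exp.mpr hsum_le
      _ ≤ ((n + 1 : ℝ) * Real.exp (-δ ^ 2 * p * m / 2)) * (n.choose k) := by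
          apply mul_le_mul_of_nonneg_right _ (le_of_lt hchoosenk)
          have h1 : Real.exp (δ * p - δ ^ 2 * p * m / 2)
              = Real.exp (δ * p) * Real.exp (-δ ^ 2 * p * m / 2) := by
            rw [← Real.exp_add]; ring_nf
          rw [h1]
          apply mul_le_mul_of_nonneg_right _ (Real.exp_nonneg _)
          calc Real.exp (δ * p) ≤ Real.exp 1 := by
                apply Real.exp_le_exp.mpr
                have h5 : δ * p < δ * 1 := mul_lt_mul_of_pos_left hp1 hδ0
                linarith
            _ ≤ 3 := by linarith [Real.exp_one_lt_d9]
            _ ≤ (n:ℝ) + 1 := by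
                have h2n : (2:ℝ) ≤ (n:ℝ) := by exact_mod_cast hn2
                linarith
      _ = (n.choose k : ℝ) * ((n + 1 : ℝ) * Real.exp (-δ ^ 2 * p * m / 2)) := by ring
  rw [div_le_iff₀ hchoosenk]
  calc (Nat.card {S : Finset (Fin n) // P S} : ℝ) = (F.card : ℝ) := hcard
    _ ≤ (n.choose k : ℝ) * ((n + 1 : ℝ) * Real.exp (-δ ^ 2 * p * m / 2)) := hfinal
    _ = (n + 1 : ℝ) * Real.exp (-δ ^ 2 * p * m / 2) * (n.choose k) := by ring
end

section
/- Let m, n be positive integers with 2m ≤ n, and let 0 < δ, p, q < 1 be real numbers such that pn and qn are integers. Let S and T be uniformly random pn-element and qn-element subsets of {1,…,n}, respectively, chosen independently. Let I be the set of indices i ∈ {1,…,m} such that |{2i−1, 2i} ∩ S| = 1 and |{2i−1, 2i} ∩ T| = 1. Then P[|I| ≤ (1−δ)·4p(1−p)q(1−q)m] ≤ (n+1)²·e^{−δ²·4p(1−p)q(1−q)m/2}. -/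
/-- The pair `{2i-1, 2i}` (1-based, for `i ∈ {1,…,m}`), as a subset of `Fin n`;
here `i` ranges over `{0,…,m-1}` (0-based), so the pair is `{2i, 2i+1}` (0-based). -/
def pairAt (n i : ℕ) : Finset (Fin n) :=
  Finset.univ.filter fun j : Fin n => (j : ℕ) = 2 * i ∨ (j : ℕ) = 2 * i + 1


lemma exp_neg_le_quad {x : ℝ} (hx : 0 ≤ x) : Real.exp (-x) ≤ 1 - x + x^2/2 := by
  have h1 : 1 + x + x^2/2 ≤ Real.exp x := by
    have := Real.sum_le_exp_of_nonneg hx 3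
    simp [Finset.sum_range_succ, Nat.factorial] at this
    nlinarith [this]
  have hpos : (0:ℝ) < 1 + x + x^2/2 := by nlinarith
  have h2 : Real.exp (-x) ≤ (1 + x + x^2/2)⁻¹ := by
    rw [Real.exp_neg]
    exact inv_anti₀ hpos h1
  have h3 : (1 + x + x^2/2)⁻¹ ≤ 1 - x + x^2/2 := by
    rw [inv_le_iff_one_le_mul₀ hpos]  -- guess name
    nlinarith [sq_nonneg x, sq_nonneg (x^2)]
  linarith

lemma mode_bound (n k : ℕ) (p : ℝ) (hp0 : 0 ≤ p) (hp1 : p ≤ 1) (hk : (k:ℝ) = p * n) :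
    1 ≤ ((n:ℝ)+1) * ((n.choose k : ℝ) * p^k * (1-p)^(n-k)) := by
  set t : ℕ → ℝ := fun j => p^j * (1-p)^(n-j) * (n.choose j : ℝ) with ht
  have hkn : k ≤ n := by
    by_contra h
    push_neg at h
    have : (n:ℝ) < k := by exact_mod_cast h
    nlinarith [Nat.cast_nonneg (α := ℝ) n]
  have hup : ∀ j, j + 1 ≤ k → t j ≤ t (j+1) := by
    intro j hj
    have hjn : j < n := lt_of_lt_of_le (by omega) hkn
    have hchoose : ((n.choose (j+1) : ℝ)) * (j+1) = (n.choose j : ℝ) * ((n:ℝ) - j) := by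
      have := Nat.choose_succ_right_eq n j
      have hcast : ((n - j : ℕ) : ℝ) = (n:ℝ) - j := by
        have : j ≤ n := le_of_lt hjn
        push_cast [Nat.cast_sub this]; ring
      calc ((n.choose (j+1) : ℝ)) * (j+1) = ((n.choose (j+1) * (j+1) : ℕ) : ℝ) := by push_cast; ring
        _ = ((n.choose j * (n - j) : ℕ) : ℝ) := by rw [this]
        _ = (n.choose j : ℝ) * ((n:ℝ) - j) := by push_cast [hcast]; ring
    have hsub : n - j = (n - (j+1)) + 1 := by omega
    have hkey : (1-p) * ((j:ℝ)+1) ≤ ((n:ℝ) - j) * p := by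
      have hjk : (j:ℝ) + 1 ≤ (k:ℝ) := by exact_mod_cast hj
      nlinarith
    have hmul : (0:ℝ) < (j:ℝ) + 1 := by positivity
    rw [ht]
    simp only []
    rw [hsub, pow_succ]
    -- goal: p^j * ((1-p)^(n-(j+1)) * (1-p)) * choose j ≤ p^(j+1) * (1-p)^(n-(j+1)) * choose (j+1)
    rw [← mul_le_mul_iff_of_pos_right hmul]
    calc p^j * ((1-p)^(n-(j+1)) * (1-p)) * (n.choose j : ℝ) * ((j:ℝ)+1)
        = (p^j * (1-p)^(n-(j+1)) * (n.choose j : ℝ)) * ((1-p) * ((j:ℝ)+1)) := by ring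
      _ ≤ (p^j * (1-p)^(n-(j+1)) * (n.choose j : ℝ)) * (((n:ℝ) - j) * p) := by
          apply mul_le_mul_of_nonneg_left hkey
          exact mul_nonneg (mul_nonneg (pow_nonneg hp0 _) (pow_nonneg (by linarith) _)) (Nat.cast_nonneg _)
      _ = p^(j+1) * (1-p)^(n-(j+1)) * ((n.choose j : ℝ) * ((n:ℝ) - j)) := by ring
      _ = p^(j+1) * (1-p)^(n-(j+1)) * (n.choose (j+1) : ℝ) * ((j:ℝ)+1) := by rw [← hchoose]; ring
  have hdown : ∀ j, k ≤ j → j < n → t (j+1) ≤ t j := by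
    intro j hj hjn
    have hchoose : ((n.choose (j+1) : ℝ)) * (j+1) = (n.choose j : ℝ) * ((n:ℝ) - j) := by
      have := Nat.choose_succ_right_eq n j
      have hcast : ((n - j : ℕ) : ℝ) = (n:ℝ) - j := by
        have : j ≤ n := le_of_lt hjn
        push_cast [Nat.cast_sub this]; ring
      calc ((n.choose (j+1) : ℝ)) * (j+1) = ((n.choose (j+1) * (j+1) : ℕ) : ℝ) := by push_cast; ring
        _ = ((n.choose j * (n - j) : ℕ) : ℝ) := by rw [this]
        _ = (n.choose j : ℝ) * ((n:ℝ) - j) := by push_cast [hcast]; ring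
    have hsub : n - j = (n - (j+1)) + 1 := by omega
    have hkey : ((n:ℝ) - j) * p ≤ (1-p) * ((j:ℝ)+1) := by
      have hjk : (k:ℝ) ≤ (j:ℝ) := by exact_mod_cast hj
      nlinarith
    have hmul : (0:ℝ) < (j:ℝ) + 1 := by positivity
    rw [ht]; simp only []
    rw [hsub, pow_succ]
    rw [← mul_le_mul_iff_of_pos_right hmul]
    calc p^(j+1) * (1-p)^(n-(j+1)) * (n.choose (j+1) : ℝ) * ((j:ℝ)+1)
        = p^(j+1) * (1-p)^(n-(j+1)) * ((n.choose (j+1) : ℝ) * ((j:ℝ)+1)) := by ring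
      _ = (p^j * (1-p)^(n-(j+1)) * (n.choose j : ℝ)) * (((n:ℝ) - j) * p) := by rw [hchoose]; ring
      _ ≤ (p^j * (1-p)^(n-(j+1)) * (n.choose j : ℝ)) * ((1-p) * ((j:ℝ)+1)) := by
          apply mul_le_mul_of_nonneg_left hkey
          exact mul_nonneg (mul_nonneg (pow_nonneg hp0 _) (pow_nonneg (by linarith) _)) (Nat.cast_nonneg _)
      _ = p^j * ((1-p)^(n-(j+1)) * (1-p)) * (n.choose j : ℝ) * ((j:ℝ)+1) := by ring
  have hmax : ∀ j, j ≤ n → t j ≤ t k := by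
    have hupto : ∀ d j, j + d = k → t j ≤ t k := by
      intro d
      induction d with
      | zero => intro j hj; simp at hj; subst hj; exact le_refl _
      | succ d ih => intro j hj
                     exact le_trans (hup j (by omega)) (ih (j+1) (by omega))
    have hdownto : ∀ d, k + d ≤ n → t (k + d) ≤ t k := by
      intro d
      induction d with
      | zero => intro _; exact le_refl _
      | succ d ih => intro hd
                     exact le_trans (hdown (k+d) (by omega) (by omega)) (ih (by omega))
    intro j hj
    rcases le_or_gt j k with h | h
    · exact hupto (k - j) j (by omega)
    · have : j = k + (j - k) := by omega
      rw [this]; exact hdownto (j - k) (by omega)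
  have hsum : (1:ℝ) = ∑ j ∈ Finset.range (n+1), t j := by
    have h := add_pow p (1-p) n
    rw [show p + (1-p) = (1:ℝ) by ring, one_pow] at h
    rw [ht]
    exact h
  have hle : ∑ j ∈ Finset.range (n+1), t j ≤ (n+1) • t k := by
    have := Finset.sum_le_card_nsmul (Finset.range (n+1)) t (t k)
      (fun j hj => hmax j (by simp at hj; omega))
    simpa using this
  have : (1:ℝ) ≤ (n+1) • t k := le_trans (le_of_eq hsum) hle
  rw [nsmul_eq_mul] at this
  rw [ht] at this
  push_cast at this
  ring_nf at this ⊢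
  linarith [this]

def pairIndex {n m : ℕ} (h : 2*m ≤ n) : (Fin m × Bool) ⊕ Fin (n - 2*m) ≃ Fin n where
  toFun x := match x with
    | .inl (i, b) => ⟨2*(i:ℕ) + b.toNat, by have := i.isLt; cases b <;> simp [Bool.toNat] <;> omega⟩
    | .inr j => ⟨2*m + (j:ℕ), by have := j.isLt; omega⟩
  invFun j := if hj : (j:ℕ) < 2*m then .inl (⟨(j:ℕ)/2, by omega⟩, decide ((j:ℕ) % 2 = 1))
    else .inr ⟨(j:ℕ) - 2*m, by have := j.isLt; omega⟩
  left_inv := by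
    rintro (⟨i, b⟩ | j)
    · have hi := i.isLt
      dsimp only
      cases b
      · rw [dif_pos (by (try simp only [Bool.toNat_false]); omega)]
        simp only [Sum.inl.injEq, Prod.mk.injEq]
        refine ⟨Fin.ext ?_, ?_⟩
        · (try simp only [Bool.toNat_false]); omega
        · rw [decide_eq_false_iff_not]
          (try simp only [Bool.toNat_false]); omega
      · rw [dif_pos (by (try simp only [Bool.toNat_true]); omega)]
        simp only [Sum.inl.injEq, Prod.mk.injEq]
        refine ⟨Fin.ext ?_, ?_⟩
        · (try simp only [Bool.toNat_true]); omega
        · rw [decide_eq_true_eq]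
          (try simp only [Bool.toNat_true]); omega
    · have hj := j.isLt
      dsimp only
      rw [dif_neg (by omega)]
      simp only [Sum.inr.injEq]
      exact Fin.ext (by dsimp only; omega)
  right_inv := by
    intro j
    dsimp only
    by_cases hj : (j:ℕ) < 2*m
    · rw [dif_pos hj]
      dsimp only
      exact Fin.ext (by
        simp only []
        rcases Nat.mod_two_eq_zero_or_one (j:ℕ) with h2 | h2 <;>
          simp only [h2, decide_eq_false_iff_not, decide_eq_true_eq] <;>
          simp [Bool.toNat] <;> omega)
    · rw [dif_neg hj]
      exact Fin.ext (by simp only []; omega)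

@[simp] lemma pairIndex_inl {n m : ℕ} (h : 2*m ≤ n) (i : Fin m) (b : Bool) :
    ((pairIndex h (.inl (i, b)) : Fin n) : ℕ) = 2*(i:ℕ) + b.toNat := rfl

@[simp] lemma pairIndex_inr {n m : ℕ} (h : 2*m ≤ n) (j : Fin (n - 2*m)) :
    ((pairIndex h (.inr j) : Fin n) : ℕ) = 2*m + (j:ℕ) := rfl

def blockEquiv {n m : ℕ} (h : 2*m ≤ n) {C : Type*} :
    ((Fin m → C × C) × (Fin (n - 2*m) → C)) ≃ (Fin n → C) where
  toFun ab := fun j => Sum.elim (fun ib : Fin m × Bool => if ib.2 then (ab.1 ib.1).2 else (ab.1 ib.1).1)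
    ab.2 ((pairIndex h).symm j)
  invFun f := (fun i => (f (pairIndex h (.inl (i, false))), f (pairIndex h (.inl (i, true)))),
    fun j => f (pairIndex h (.inr j)))
  left_inv := by
    rintro ⟨a, b⟩
    refine Prod.ext ?_ ?_ <;> funext x <;> simp [Equiv.symm_apply_apply]
  right_inv := by
    intro f
    funext j
    obtain ⟨x, rfl⟩ : ∃ x, pairIndex h x = j := ⟨(pairIndex h).symm j, (pairIndex h).apply_symm_apply j⟩
    rcases x with ⟨i, b⟩ | jj
    · cases b <;> simp
    · simp

lemma prodSplit {n m : ℕ} (h2 : 2*m ≤ n) {C : Type*} [Fintype C] (u : C → ℝ) (φ : C → C → ℝ) :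
    ∑ f : Fin n → C, (∏ j, u (f j)) *
        ∏ i : Fin m, φ (f (pairIndex h2 (.inl (i, false)))) (f (pairIndex h2 (.inl (i, true))))
    = (∑ z : C × C, u z.1 * u z.2 * φ z.1 z.2) ^ m * (∑ x : C, u x) ^ (n - 2*m) := by
  classical
  have hsplit : ∀ f : Fin n → C, (∏ j, u (f j)) =
      (∏ i : Fin m, u (f (pairIndex h2 (.inl (i, false)))) * u (f (pairIndex h2 (.inl (i, true)))))
      * ∏ j : Fin (n - 2*m), u (f (pairIndex h2 (.inr j))) := by
    intro f
    rw [← Equiv.prod_comp (pairIndex h2) (fun j => u (f j))]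
    rw [Fintype.prod_sum_type]
    congr 1
    rw [Fintype.prod_prod_type]
    refine Finset.prod_congr rfl fun i _ => ?_
    rw [Fintype.prod_bool]
    ring
  calc ∑ f : Fin n → C, (∏ j, u (f j)) *
        ∏ i : Fin m, φ (f (pairIndex h2 (.inl (i, false)))) (f (pairIndex h2 (.inl (i, true))))
      = ∑ f : Fin n → C,
          (∏ i : Fin m, u (f (pairIndex h2 (.inl (i, false)))) * u (f (pairIndex h2 (.inl (i, true))))
            * φ (f (pairIndex h2 (.inl (i, false)))) (f (pairIndex h2 (.inl (i, true)))))
          * ∏ j : Fin (n - 2*m), u (f (pairIndex h2 (.inr j))) := by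
        refine Finset.sum_congr rfl fun f _ => ?_
        rw [hsplit f]
        simp only [Finset.prod_mul_distrib]
        ring
    _ = ∑ ab : (Fin m → C × C) × (Fin (n - 2*m) → C),
          (∏ i : Fin m, u (ab.1 i).1 * u (ab.1 i).2 * φ (ab.1 i).1 (ab.1 i).2)
          * ∏ j : Fin (n - 2*m), u (ab.2 j) := by
        rw [← Equiv.sum_comp (blockEquiv h2)]
        refine Finset.sum_congr rfl fun ab _ => ?_
        have e1 : ∀ i : Fin m, (blockEquiv h2 (C := C)) ab (pairIndex h2 (.inl (i, false))) = (ab.1 i).1 := by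
          intro i; simp [blockEquiv, Equiv.symm_apply_apply]
        have e2 : ∀ i : Fin m, (blockEquiv h2 (C := C)) ab (pairIndex h2 (.inl (i, true))) = (ab.1 i).2 := by
          intro i; simp [blockEquiv, Equiv.symm_apply_apply]
        have e3 : ∀ j, (blockEquiv h2 (C := C)) ab (pairIndex h2 (.inr j)) = ab.2 j := by
          intro j; simp [blockEquiv, Equiv.symm_apply_apply]
        simp only [e1, e2, e3]
    _ = (∑ a : Fin m → C × C, ∏ i : Fin m, u (a i).1 * u (a i).2 * φ (a i).1 (a i).2)
        * ∑ b : Fin (n - 2*m) → C, ∏ j : Fin (n - 2*m), u (b j) := by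
        rw [Fintype.sum_prod_type]
        dsimp only
        rw [← Finset.sum_mul_sum]
    _ = (∑ z : C × C, u z.1 * u z.2 * φ z.1 z.2) ^ m * (∑ x : C, u x) ^ (n - 2*m) := by
        rw [Fintype.sum_pow, Fintype.sum_pow]


def setsToFun {n : ℕ} : Finset (Fin n) × Finset (Fin n) ≃ (Fin n → Bool × Bool) where
  toFun ST := fun j => (decide (j ∈ ST.1), decide (j ∈ ST.2))
  invFun h := (Finset.univ.filter fun j => (h j).1, Finset.univ.filter fun j => (h j).2)
  left_inv := by
    rintro ⟨S, T⟩
    refine Prod.ext ?_ ?_ <;> · ext j; simp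
  right_inv := by
    intro h
    funext j
    refine Prod.ext ?_ ?_ <;> simp

lemma prod_ite_mem (n : ℕ) (S : Finset (Fin n)) (a b : ℝ) :
    (∏ j : Fin n, if j ∈ S then a else b) = a^S.card * b^(n - S.card) := by
  classical
  rw [← Finset.prod_filter_mul_prod_filter_not Finset.univ (· ∈ S)]
  have h1 : Finset.univ.filter (· ∈ S) = S := by ext j; simp
  have h2 : Finset.univ.filter (fun j => ¬ j ∈ S) = Sᶜ := by ext j; simp
  rw [h1, h2]
  rw [Finset.prod_congr rfl (fun j hj => if_pos hj), Finset.prod_congr rfl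
    (fun j (hj : j ∈ Sᶜ) => if_neg (Finset.mem_compl.mp hj))]
  rw [Finset.prod_const, Finset.prod_const, Finset.card_compl]
  simp

lemma card_inter_pair {α : Type*} [DecidableEq α] (S : Finset α) (x y : α) (hxy : x ≠ y) :
    (S ∩ {x, y}).card = 1 ↔ (decide (x ∈ S) ≠ decide (y ∈ S)) := by
  have hrw : S ∩ {x, y} = ({x, y} : Finset α).filter (· ∈ S) := by
    rw [Finset.filter_mem_eq_inter, Finset.inter_comm]
  rw [hrw, Finset.filter_insert, Finset.filter_singleton]
  by_cases hx : x ∈ S <;> by_cases hy : y ∈ S <;> simp [hx, hy]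
  · rw [Finset.card_insert_of_notMem (by simp [hxy])]
    simp

lemma pairAt_eq {n m : ℕ} (h2 : 2*m ≤ n) (i : Fin m) :
    pairAt n i = {pairIndex h2 (.inl (i, false)), pairIndex h2 (.inl (i, true))} := by
  ext j
  simp only [pairAt, Finset.mem_filter, Finset.mem_univ, true_and, Finset.mem_insert,
    Finset.mem_singleton, Fin.ext_iff, pairIndex_inl, Bool.toNat_false, Bool.toNat_true]
  omega

lemma pair_ne {n m : ℕ} (h2 : 2*m ≤ n) (i : Fin m) :
    pairIndex h2 (.inl (i, false)) ≠ pairIndex h2 (.inl (i, true)) := by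
  intro h
  have := congrArg Fin.val h
  simp only [pairIndex_inl, Bool.toNat_false, Bool.toNat_true] at this
  omega

lemma count_eq {n m : ℕ} (h2 : 2*m ≤ n) (S T : Finset (Fin n)) :
    (Finset.univ.filter fun i : Fin m =>
       (decide ((pairIndex h2 (.inl (i, false))) ∈ S) ≠ decide ((pairIndex h2 (.inl (i, true))) ∈ S)) ∧
       (decide ((pairIndex h2 (.inl (i, false))) ∈ T) ≠ decide ((pairIndex h2 (.inl (i, true))) ∈ T))).card
    = ((Finset.range m).filter fun i =>
        (S ∩ pairAt n i).card = 1 ∧ (T ∩ pairAt n i).card = 1).card := by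
  classical
  have key : ∀ (U : Finset (Fin n)) (i : Fin m), ((U ∩ pairAt n (i:ℕ)).card = 1 ↔
      (decide ((pairIndex h2 (.inl (i, false))) ∈ U) ≠ decide ((pairIndex h2 (.inl (i, true))) ∈ U))) := by
    intro U i
    rw [pairAt_eq h2 i]
    exact card_inter_pair U _ _ (pair_ne h2 i)
  refine Finset.card_bij (fun i _ => (i : ℕ)) ?_ ?_ ?_
  · intro i hi
    simp only [Finset.mem_filter, Finset.mem_univ, true_and] at hi
    simp only [Finset.mem_filter, Finset.mem_range]
    exact ⟨i.isLt, (key S i).mpr hi.1, (key T i).mpr hi.2⟩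
  · intro a _ b _ hab
    exact Fin.ext hab
  · intro j hj
    simp only [Finset.mem_filter, Finset.mem_range] at hj
    refine ⟨⟨j, hj.1⟩, ?_, rfl⟩
    simp only [Finset.mem_filter, Finset.mem_univ, true_and]
    exact ⟨(key S ⟨j, hj.1⟩).mp hj.2.1, (key T ⟨j, hj.1⟩).mp hj.2.2⟩

@[simp] lemma setsToFun_apply {n : ℕ} (ST : Finset (Fin n) × Finset (Fin n)) (j : Fin n) :
    setsToFun ST j = (decide (j ∈ ST.1), decide (j ∈ ST.2)) := rfl

set_option maxHeartbeats 2000000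

/-- Let `S, T` be independent uniformly random `pn`- and `qn`-element subsets of `{1,…,n}`,
and let `I` be the set of `i ∈ {1,…,m}` with `|{2i-1,2i} ∩ S| = |{2i-1,2i} ∩ T| = 1`. Then
`P[|I| ≤ (1-δ)·4p(1-p)q(1-q)m] ≤ (n+1)²·exp(-δ²·4p(1-p)q(1-q)m/2)`. -/
theorem stmt8 (n m : ℕ) (hm : 0 < m) (hmn : 2 * m ≤ n) (δ p q : ℝ)
    (hδ0 : 0 < δ) (hδ1 : δ < 1) (hp0 : 0 < p) (hp1 : p < 1) (hq0 : 0 < q) (hq1 : q < 1)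
    (k l : ℕ) (hk : (k : ℝ) = p * n) (hl : (l : ℝ) = q * n) :
    (Nat.card {ST : Finset (Fin n) × Finset (Fin n) //
        ST.1.card = k ∧ ST.2.card = l ∧
        ((((Finset.range m).filter fun i =>
              (ST.1 ∩ pairAt n i).card = 1 ∧ (ST.2 ∩ pairAt n i).card = 1).card : ℝ) ≤
          (1 - δ) * (4 * p * (1 - p) * q * (1 - q)) * m)} : ℝ) /
      ((n.choose k : ℝ) * (n.choose l : ℝ)) ≤
    ((n : ℝ) + 1) ^ 2 * Real.exp (-δ ^ 2 * (4 * p * (1 - p) * q * (1 - q)) * m / 2) := by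
  classical
  set μ : ℝ := 4 * p * (1 - p) * q * (1 - q) with hμdef
  set E : ℝ := Real.exp (-δ) with hEdef
  set u : Bool × Bool → ℝ := fun x => (if x.1 then p else 1 - p) * (if x.2 then q else 1 - q)
    with hudef
  set φ : Bool × Bool → Bool × Bool → ℝ := fun x y => if x.1 ≠ y.1 ∧ x.2 ≠ y.2 then E else 1
    with hφdef
  have hp1' : (0:ℝ) ≤ 1 - p := by linarith
  have hq1' : (0:ℝ) ≤ 1 - q := by linarith
  -- basic positivity
  have hbp : (0:ℝ) < p^k * (1-p)^(n-k) := mul_pos (pow_pos hp0 _) (pow_pos (by linarith) _)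
  have hbq : (0:ℝ) < q^l * (1-q)^(n-l) := mul_pos (pow_pos hq0 _) (pow_pos (by linarith) _)
  have hkn : k ≤ n := by
    have h : (k:ℝ) ≤ (n:ℝ) := by rw [hk]; nlinarith [Nat.cast_nonneg (α := ℝ) n]
    exact_mod_cast h
  have hln : l ≤ n := by
    have h : (l:ℝ) ≤ (n:ℝ) := by rw [hl]; nlinarith [Nat.cast_nonneg (α := ℝ) n]
    exact_mod_cast h
  have hCk : (0:ℝ) < (n.choose k : ℝ) := by exact_mod_cast Nat.choose_pos hkn
  have hCl : (0:ℝ) < (n.choose l : ℝ) := by exact_mod_cast Nat.choose_pos hln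
  have hmode_k := mode_bound n k p hp0.le hp1.le hk
  have hmode_l := mode_bound n l q hq0.le hq1.le hl
  -- rewrite Nat.card as a filter card
  rw [Nat.card_eq_fintype_card, Fintype.card_subtype]
  -- key sums
  have husum : (∑ x : Bool × Bool, u x) = 1 := by
    rw [hudef, Fintype.sum_prod_type]
    simp [Fintype.sum_bool]
    ring
  have hφsum : (∑ z : (Bool × Bool) × (Bool × Bool), u z.1 * u z.2 * φ z.1 z.2)
      = 1 - μ + μ * E := by
    rw [hudef, hφdef, Fintype.sum_prod_type]
    simp [Fintype.sum_prod_type, Fintype.sum_bool]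
    rw [hμdef]
    ring
  have sum_eq : ∑ ST : Finset (Fin n) × Finset (Fin n),
      (p^ST.1.card * (1-p)^(n - ST.1.card)) * (q^ST.2.card * (1-q)^(n - ST.2.card))
        * E ^ (((Finset.range m).filter fun i =>
            (ST.1 ∩ pairAt n i).card = 1 ∧ (ST.2 ∩ pairAt n i).card = 1).card)
      = (∑ z : (Bool × Bool) × (Bool × Bool), u z.1 * u z.2 * φ z.1 z.2) ^ m
        * (∑ x : Bool × Bool, u x) ^ (n - 2*m) := by
    rw [← prodSplit hmn u φ]
    rw [← Equiv.sum_comp (setsToFun (n := n)) (fun f => (∏ j, u (f j)) *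
      ∏ i : Fin m, φ (f (pairIndex hmn (.inl (i, false)))) (f (pairIndex hmn (.inl (i, true)))))]
    refine Finset.sum_congr rfl fun ST _ => ?_
    congr 1
    · -- weight part
      refine Eq.symm ?_
      calc ∏ j, u (setsToFun ST j)
          = ∏ j, ((if j ∈ ST.1 then p else 1-p) * (if j ∈ ST.2 then q else 1-q)) := by
            refine Finset.prod_congr rfl fun j _ => ?_
            rw [hudef]
            simp only [setsToFun_apply]
            simp [decide_eq_true_eq]
        _ = (∏ j, if j ∈ ST.1 then p else 1-p) * (∏ j, if j ∈ ST.2 then q else 1-q) :=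
            Finset.prod_mul_distrib
        _ = _ := by rw [prod_ite_mem, prod_ite_mem]
    · -- count part
      rw [hφdef]
      simp only [setsToFun_apply]
      rw [← count_eq hmn ST.1 ST.2]
      rw [← Finset.prod_const (b := E)]
      rw [Finset.prod_filter]
      rfl
  -- analytic bounds
  clear_value u φ
  have hEpos : (0:ℝ) < E := by rw [hEdef]; exact Real.exp_pos _
  have hE1 : E ≤ 1 - δ + δ^2/2 := by rw [hEdef]; exact exp_neg_le_quad hδ0.le
  have hμ0 : (0:ℝ) < μ := by
    rw [hμdef]
    exact mul_pos (mul_pos (mul_pos (mul_pos (by norm_num) hp0) (by linarith)) hq0) (by linarith)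
  have hμ1 : μ ≤ 1 := by
    have ha : p * (1-p) ≤ 1/4 := by nlinarith [sq_nonneg (p - 1/2)]
    have hb : q * (1-q) ≤ 1/4 := by nlinarith [sq_nonneg (q - 1/2)]
    have ha0 : (0:ℝ) ≤ p * (1-p) := mul_nonneg hp0.le hp1'
    have hb0 : (0:ℝ) ≤ q * (1-q) := mul_nonneg hq0.le hq1'
    have := mul_le_mul ha hb hb0 (by norm_num)
    rw [hμdef]
    nlinarith [this]
  clear_value μ E
  have hr0 : (0:ℝ) ≤ 1 - μ + μ * E := by nlinarith
  have hr : 1 - μ + μ * E ≤ Real.exp (-(μ * (δ - δ^2/2))) := by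
    have h := Real.add_one_le_exp (-(μ * (δ - δ^2/2)))
    have h2 : μ * E ≤ μ * (1 - δ + δ^2/2) := mul_le_mul_of_nonneg_left hE1 hμ0.le
    nlinarith
  have hpow : (1 - μ + μ * E)^m ≤ Real.exp (-(μ * (δ - δ^2/2)) * m) := by
    calc (1 - μ + μ * E)^m ≤ (Real.exp (-(μ * (δ - δ^2/2))))^m := pow_le_pow_left₀ hr0 hr m
      _ = Real.exp (-(μ * (δ - δ^2/2)) * m) := by
          rw [← Real.exp_nat_mul]; congr 1; ring
  -- step 1: from filter to full sum
  have h1 : ((Finset.univ.filter (fun ST : Finset (Fin n) × Finset (Fin n) =>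
        ST.1.card = k ∧ ST.2.card = l ∧
        ((((Finset.range m).filter fun i =>
              (ST.1 ∩ pairAt n i).card = 1 ∧ (ST.2 ∩ pairAt n i).card = 1).card : ℝ) ≤
          (1 - δ) * μ * m))).card : ℝ) * ((p^k * (1-p)^(n-k)) * (q^l * (1-q)^(n-l)))
      ≤ Real.exp (δ * ((1-δ) * μ * m)) * ∑ ST : Finset (Fin n) × Finset (Fin n),
          (p^ST.1.card * (1-p)^(n - ST.1.card)) * (q^ST.2.card * (1-q)^(n - ST.2.card))
            * E ^ (((Finset.range m).filter fun i =>
                (ST.1 ∩ pairAt n i).card = 1 ∧ (ST.2 ∩ pairAt n i).card = 1).card) := by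
    set F := Finset.univ.filter (fun ST : Finset (Fin n) × Finset (Fin n) =>
        ST.1.card = k ∧ ST.2.card = l ∧
        ((((Finset.range m).filter fun i =>
              (ST.1 ∩ pairAt n i).card = 1 ∧ (ST.2 ∩ pairAt n i).card = 1).card : ℝ) ≤
          (1 - δ) * μ * m)) with hF
    have hterm : ∀ ST ∈ F, (p^k * (1-p)^(n-k)) * (q^l * (1-q)^(n-l))
        ≤ Real.exp (δ * ((1-δ) * μ * m)) *
          ((p^ST.1.card * (1-p)^(n - ST.1.card)) * (q^ST.2.card * (1-q)^(n - ST.2.card))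
            * E ^ (((Finset.range m).filter fun i =>
                (ST.1 ∩ pairAt n i).card = 1 ∧ (ST.2 ∩ pairAt n i).card = 1).card)) := by
      intro ST hST
      rw [hF, Finset.mem_filter] at hST
      obtain ⟨-, hSk, hTl, hcnt⟩ := hST
      rw [hSk, hTl]
      set c : ℕ := ((Finset.range m).filter fun i =>
          (ST.1 ∩ pairAt n i).card = 1 ∧ (ST.2 ∩ pairAt n i).card = 1).card with hc
      have hEc : E ^ c = Real.exp (-(δ * c)) := by
        rw [hEdef, ← Real.exp_nat_mul]; congr 1; ring
      have hone : (1:ℝ) ≤ Real.exp (δ * ((1-δ) * μ * m)) * E ^ c := by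
        rw [hEc, ← Real.exp_add]
        refine Real.one_le_exp ?_
        nlinarith
      calc (p^k * (1-p)^(n-k)) * (q^l * (1-q)^(n-l))
          = ((p^k * (1-p)^(n-k)) * (q^l * (1-q)^(n-l))) * 1 := by ring
        _ ≤ ((p^k * (1-p)^(n-k)) * (q^l * (1-q)^(n-l))) *
            (Real.exp (δ * ((1-δ) * μ * m)) * E ^ c) := by
            refine mul_le_mul_of_nonneg_left hone ?_
            exact le_of_lt (mul_pos hbp hbq)
        _ = _ := by ring
    calc (F.card : ℝ) * ((p^k * (1-p)^(n-k)) * (q^l * (1-q)^(n-l)))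
        = ∑ _ST ∈ F, ((p^k * (1-p)^(n-k)) * (q^l * (1-q)^(n-l))) := by
          rw [Finset.sum_const, nsmul_eq_mul]
      _ ≤ ∑ ST ∈ F, Real.exp (δ * ((1-δ) * μ * m)) *
          ((p^ST.1.card * (1-p)^(n - ST.1.card)) * (q^ST.2.card * (1-q)^(n - ST.2.card))
            * E ^ (((Finset.range m).filter fun i =>
                (ST.1 ∩ pairAt n i).card = 1 ∧ (ST.2 ∩ pairAt n i).card = 1).card)) :=
          Finset.sum_le_sum hterm
      _ ≤ ∑ ST : Finset (Fin n) × Finset (Fin n), Real.exp (δ * ((1-δ) * μ * m)) *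
          ((p^ST.1.card * (1-p)^(n - ST.1.card)) * (q^ST.2.card * (1-q)^(n - ST.2.card))
            * E ^ (((Finset.range m).filter fun i =>
                (ST.1 ∩ pairAt n i).card = 1 ∧ (ST.2 ∩ pairAt n i).card = 1).card)) := by
          refine Finset.sum_le_sum_of_subset_of_nonneg (Finset.subset_univ _) fun ST _ _ => ?_
          have hwn : (0:ℝ) ≤ (p^ST.1.card * (1-p)^(n - ST.1.card))
              * (q^ST.2.card * (1-q)^(n - ST.2.card)) :=
            mul_nonneg (mul_nonneg (pow_nonneg hp0.le _) (pow_nonneg hp1' _))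
              (mul_nonneg (pow_nonneg hq0.le _) (pow_nonneg hq1' _))
          exact mul_nonneg (Real.exp_nonneg _) (mul_nonneg hwn (pow_nonneg hEpos.le _))
      _ = _ := by rw [← Finset.mul_sum]
  -- step 2: total bound
  have h2 : ((Finset.univ.filter (fun ST : Finset (Fin n) × Finset (Fin n) =>
        ST.1.card = k ∧ ST.2.card = l ∧
        ((((Finset.range m).filter fun i =>
              (ST.1 ∩ pairAt n i).card = 1 ∧ (ST.2 ∩ pairAt n i).card = 1).card : ℝ) ≤
          (1 - δ) * μ * m))).card : ℝ) * ((p^k * (1-p)^(n-k)) * (q^l * (1-q)^(n-l)))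
      ≤ Real.exp (-δ ^ 2 * μ * ↑m / 2) := by
    refine le_trans h1 ?_
    rw [sum_eq, hφsum, husum, one_pow, mul_one]
    calc Real.exp (δ * ((1-δ) * μ * m)) * (1 - μ + μ * E)^m
        ≤ Real.exp (δ * ((1-δ) * μ * m)) * Real.exp (-(μ * (δ - δ^2/2)) * m) :=
          mul_le_mul_of_nonneg_left hpow (Real.exp_nonneg _)
      _ = Real.exp (δ * ((1-δ) * μ * m) + -(μ * (δ - δ^2/2)) * m) := (Real.exp_add _ _).symm
      _ = Real.exp (-δ ^ 2 * μ * ↑m / 2) := by congr 1; ring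
  -- final assembly
  rw [div_le_iff₀ (mul_pos hCk hCl)]
  have hbase : (0:ℝ) < (p^k * (1-p)^(n-k)) * (q^l * (1-q)^(n-l)) := mul_pos hbp hbq
  have h3 := (le_div_iff₀ hbase).mpr h2
  refine le_trans h3 ?_
  rw [div_le_iff₀ hbase]
  have hmm : (1:ℝ) ≤ ((n:ℝ)+1)^2 * ((n.choose k : ℝ) * (n.choose l : ℝ))
      * ((p^k * (1-p)^(n-k)) * (q^l * (1-q)^(n-l))) := by
    have hA : (0:ℝ) ≤ ((n:ℝ)+1) * ((n.choose l : ℝ) * q^l * (1-q)^(n-l)) :=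
      le_trans zero_le_one hmode_l
    have := mul_le_mul hmode_k hmode_l zero_le_one
      (le_trans zero_le_one hmode_k)
    calc (1:ℝ) = 1 * 1 := by ring
      _ ≤ (((n:ℝ)+1) * ((n.choose k : ℝ) * p^k * (1-p)^(n-k)))
          * (((n:ℝ)+1) * ((n.choose l : ℝ) * q^l * (1-q)^(n-l))) := this
      _ = _ := by ring
  calc Real.exp (-δ ^ 2 * μ * ↑m / 2)
      = Real.exp (-δ ^ 2 * μ * ↑m / 2) * 1 := by ring
    _ ≤ Real.exp (-δ ^ 2 * μ * ↑m / 2) * (((n:ℝ)+1)^2 * ((n.choose k : ℝ) * (n.choose l : ℝ))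
        * ((p^k * (1-p)^(n-k)) * (q^l * (1-q)^(n-l)))) :=
        mul_le_mul_of_nonneg_left hmm (Real.exp_nonneg _)
    _ = ((n:ℝ)+1)^2 * Real.exp (-δ ^ 2 * μ * ↑m / 2) * ((n.choose k : ℝ) * (n.choose l : ℝ))
        * ((p^k * (1-p)^(n-k)) * (q^l * (1-q)^(n-l))) := by ring
end

section
/- Let A and B be finite sets of real numbers, each of size at least 2, and let c = (c₁,…,c_s) be any tuple of nonzero integers with s ≥ 2. Then κ_c(A,B) ≤ κ_{(1,−1)}(A,B). -/
/-- `kappa c a b = K_c(A,B)/(nn')^{2s}`, where `K_c(A,B)` counts the `4s`-tuples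
`(i₁,j₁,…,i_s,j_s) ∈ [n]^{2s}`, `(i'₁,j'₁,…,i'_s,j'_s) ∈ [n']^{2s}` with
`∑_{k=1}^s c_k (a_{i_k} - a_{j_k})(b_{i'_k} - b_{j'_k}) = 0`. The tuple of coefficients
`c` is given as a list of length `s`. -/
noncomputable def kappa (c : List ℤ) {n n' : ℕ} (a : Fin n → ℝ) (b : Fin n' → ℝ) : ℝ :=
  (Nat.card {t : (Fin c.length → Fin n) × (Fin c.length → Fin n) ×
      (Fin c.length → Fin n') × (Fin c.length → Fin n') //
      ∑ k : Fin c.length, (c.get k : ℝ) *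
        (a (t.1 k) - a (t.2.1 k)) * (b (t.2.2.1 k) - b (t.2.2.2 k)) = 0} : ℝ) /
    ((n * n' : ℕ) : ℝ) ^ (2 * c.length)

open Finset

open scoped Classical in
/-- number of `q` with `X q = r` -/
noncomputable def cntX {Q : Type*} [Fintype Q] (X : Q → ℝ) (r : ℝ) : ℕ :=
  (Finset.univ.filter fun q => X q = r).card

lemma cntX_eq_zero {Q : Type*} [Fintype Q] (X : Q → ℝ) {r : ℝ}
    (h : r ∉ Finset.univ.image X) : cntX X r = 0 := by
  classical
  rw [cntX, Finset.card_eq_zero, Finset.filter_eq_empty_iff]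
  intro q _ hq
  exact h (hq ▸ Finset.mem_image_of_mem X (Finset.mem_univ q))

open scoped Classical in
/-- Cauchy–Schwarz step: for nonzero `c1, c2` and any `v`, the number of pairs with
`c1 X q1 + c2 X q2 = v` is at most the number of pairs with `X q1 = X q2`. -/
lemma keyCS {Q : Type*} [Fintype Q] (X : Q → ℝ) {c1 c2 : ℝ} (h1 : c1 ≠ 0) (h2 : c2 ≠ 0)
    (v : ℝ) :
    (Finset.univ.filter fun t : Q × Q => c1 * X t.1 + c2 * X t.2 = v).card ≤
    (Finset.univ.filter fun t : Q × Q => X t.1 = X t.2).card := by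
  set f : ℝ → ℝ := fun r => (v - c1 * r) / c2 with hf
  have hfinj : Function.Injective f := by
    intro x y h
    rw [hf] at h
    simp only [div_eq_div_iff h2 h2] at h
    have h3 : v - c1 * x = v - c1 * y := mul_right_cancel₀ h2 h
    have h4 : c1 * x = c1 * y := by linarith
    exact mul_left_cancel₀ h1 h4
  have hL : (Finset.univ.filter fun t : Q × Q => c1 * X t.1 + c2 * X t.2 = v).card
      = ∑ q1 : Q, cntX X (f (X q1)) := by
    rw [Finset.card_filter, Fintype.sum_prod_type]
    refine Finset.sum_congr rfl fun q1 _ => ?_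
    rw [cntX, Finset.card_filter]
    refine Finset.sum_congr rfl fun q2 _ => ?_
    refine if_congr ?_ rfl rfl
    rw [hf, eq_div_iff h2]
    constructor <;> intro h <;> linarith
  have hR : (Finset.univ.filter fun t : Q × Q => X t.1 = X t.2).card
      = ∑ q1 : Q, cntX X (X q1) := by
    rw [Finset.card_filter, Fintype.sum_prod_type]
    refine Finset.sum_congr rfl fun q1 _ => ?_
    rw [cntX, Finset.card_filter]
    refine Finset.sum_congr rfl fun q2 _ => ?_
    exact if_congr eq_comm rfl rfl
  rw [hL, hR]
  set S : Finset ℝ := Finset.univ.image X with hS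
  have hgroup : ∀ F : ℝ → ℕ, ∑ q1 : Q, F (X q1) = ∑ r ∈ S, cntX X r * F r := by
    intro F
    rw [← Finset.sum_fiberwise_of_maps_to (g := X)
      (fun q _ => Finset.mem_image_of_mem X (Finset.mem_univ q))]
    refine Finset.sum_congr rfl fun r _ => ?_
    rw [cntX]
    rw [Finset.sum_congr rfl (fun q hq => by rw [(Finset.mem_filter.mp hq).2])]
    rw [Finset.sum_const, smul_eq_mul]
  rw [hgroup fun r => cntX X (f r), hgroup fun r => cntX X r]
  have himg : ∑ r ∈ S, (cntX X (f r) : ℝ) ^ 2 ≤ ∑ r ∈ S, (cntX X r : ℝ) ^ 2 := by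
    rw [← Finset.sum_image (g := f) (f := fun r => (cntX X r : ℝ) ^ 2)
      (fun x _ y _ h => hfinj h)]
    rw [← Finset.sum_inter_add_sum_sdiff (S.image f) S fun r => (cntX X r : ℝ) ^ 2]
    have hz : ∑ r ∈ S.image f \ S, (cntX X r : ℝ) ^ 2 = 0 := by
      refine Finset.sum_eq_zero fun r hr => ?_
      rw [cntX_eq_zero X (Finset.mem_sdiff.mp hr).2]
      norm_num
    rw [hz, add_zero]
    exact Finset.sum_le_sum_of_subset_of_nonneg Finset.inter_subset_right
      fun r _ _ => by positivity
  have cs := Finset.sum_mul_sq_le_sq_mul_sq S (fun r => (cntX X r : ℝ))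
    (fun r => (cntX X (f r) : ℝ))
  have hA : (0:ℝ) ≤ ∑ r ∈ S, (cntX X r : ℝ) * (cntX X (f r) : ℝ) :=
    Finset.sum_nonneg fun r _ => by positivity
  have hB : (0:ℝ) ≤ ∑ r ∈ S, (cntX X r : ℝ) ^ 2 :=
    Finset.sum_nonneg fun r _ => by positivity
  have hBsq : (∑ r ∈ S, (cntX X r : ℝ) * (cntX X (f r) : ℝ)) ^ 2
      ≤ (∑ r ∈ S, (cntX X r : ℝ) ^ 2) ^ 2 := by
    calc (∑ r ∈ S, (cntX X r : ℝ) * (cntX X (f r) : ℝ)) ^ 2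
        ≤ (∑ r ∈ S, (cntX X r : ℝ) ^ 2) * ∑ r ∈ S, (cntX X (f r) : ℝ) ^ 2 := cs
      _ ≤ (∑ r ∈ S, (cntX X r : ℝ) ^ 2) ^ 2 := by
          rw [sq]; exact mul_le_mul_of_nonneg_left himg hB
  have key : (∑ r ∈ S, (cntX X r : ℝ) * (cntX X (f r) : ℝ))
      ≤ ∑ r ∈ S, (cntX X r : ℝ) ^ 2 := by nlinarith [hBsq, hA, hB]
  have final : ((∑ r ∈ S, cntX X r * cntX X (f r) : ℕ) : ℝ)
      ≤ ((∑ r ∈ S, cntX X r * cntX X r : ℕ) : ℝ) := by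
    push_cast
    simpa [sq] using key
  exact_mod_cast final

open scoped Classical in
/-- Conditioning on the remaining coordinates. -/
lemma step2 {Q : Type*} [Fintype Q] (X : Q → ℝ) {c1 c2 : ℤ} (h1 : c1 ≠ 0) (h2 : c2 ≠ 0)
    (c' : List ℤ) :
    (Finset.univ.filter fun t : Q × Q × (Fin c'.length → Q) =>
        (c1:ℝ) * X t.1 + (c2:ℝ) * X t.2.1 + ∑ k, (c'.get k : ℝ) * X (t.2.2 k) = 0).card
    ≤ Fintype.card Q ^ c'.length *
      (Finset.univ.filter fun t : Q × Q => X t.1 = X t.2).card := by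
  have h1' : (c1 : ℝ) ≠ 0 := Int.cast_ne_zero.mpr h1
  have h2' : (c2 : ℝ) ≠ 0 := Int.cast_ne_zero.mpr h2
  set E := (Finset.univ.filter fun t : Q × Q => X t.1 = X t.2).card with hE
  rw [Finset.card_filter]
  simp only [Fintype.sum_prod_type]
  have hswap : ∀ q1 : Q,
      (∑ q2 : Q, ∑ h : Fin c'.length → Q,
        (if (c1:ℝ) * X q1 + (c2:ℝ) * X q2 + ∑ k, (c'.get k : ℝ) * X (h k) = 0 then 1 else 0))
      = ∑ h : Fin c'.length → Q, ∑ q2 : Q,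
        (if (c1:ℝ) * X q1 + (c2:ℝ) * X q2 + ∑ k, (c'.get k : ℝ) * X (h k) = 0 then 1 else 0) :=
    fun q1 => Finset.sum_comm
  simp only [hswap]
  rw [Finset.sum_comm]
  have hb : ∀ h : Fin c'.length → Q,
      (∑ q1 : Q, ∑ q2 : Q,
        (if (c1:ℝ) * X q1 + (c2:ℝ) * X q2 + ∑ k, (c'.get k : ℝ) * X (h k) = 0 then 1 else 0))
      ≤ E := by
    intro h
    have heq : (∑ q1 : Q, ∑ q2 : Q,
        (if (c1:ℝ) * X q1 + (c2:ℝ) * X q2 + ∑ k, (c'.get k : ℝ) * X (h k) = 0 then 1 else 0))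
        = (Finset.univ.filter fun t : Q × Q =>
            (c1:ℝ) * X t.1 + (c2:ℝ) * X t.2 = -(∑ k, (c'.get k : ℝ) * X (h k))).card := by
      rw [Finset.card_filter, Fintype.sum_prod_type]
      refine Finset.sum_congr rfl fun q1 _ => Finset.sum_congr rfl fun q2 _ => ?_
      refine if_congr ?_ rfl rfl
      constructor <;> intro hh <;> linarith
    rw [heq, hE]
    exact keyCS X h1' h2' _
  calc (∑ h : Fin c'.length → Q, ∑ q1 : Q, ∑ q2 : Q,
        (if (c1:ℝ) * X q1 + (c2:ℝ) * X q2 + ∑ k, (c'.get k : ℝ) * X (h k) = 0 then 1 else 0))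
      ≤ ∑ _h : Fin c'.length → Q, E := Finset.sum_le_sum fun h _ => hb h
    _ = Fintype.card Q ^ c'.length * E := by
        rw [Finset.sum_const, smul_eq_mul, Finset.card_univ, Fintype.card_fun,
          Fintype.card_fin]

open scoped Classical in
/-- The count of solutions for the tuple `(1,-1)` equals the "energy" count. -/
lemma count_two {Q : Type*} [Fintype Q] (X : Q → ℝ) :
    (Finset.univ.filter fun g : Fin (([1,-1] : List ℤ)).length → Q =>
        ∑ k, ((([1,-1] : List ℤ).get k : ℤ) : ℝ) * X (g k) = 0).card
      = (Finset.univ.filter fun t : Q × Q => X t.1 = X t.2).card := by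
  have hsum : ∀ g : Fin (([1,-1] : List ℤ)).length → Q,
      (∑ k, ((([1,-1] : List ℤ).get k : ℤ) : ℝ) * X (g k))
        = X (g (0 : Fin 2)) - X (g (1 : Fin 2)) := by
    intro g
    show (∑ k : Fin 2, ((([1,-1] : List ℤ).get k : ℤ) : ℝ) * X (g k))
      = X (g (0 : Fin 2)) - X (g (1 : Fin 2))
    rw [Fin.sum_univ_two]
    norm_num [List.get]
    ring
  apply Finset.card_bij' (fun g _ => (g (0 : Fin 2), g (1 : Fin 2))) (fun t _ => ![t.1, t.2])
  · intro g hg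
    simp only [Finset.mem_filter, Finset.mem_univ, true_and] at hg ⊢
    rw [hsum g] at hg
    linarith [hg]
  · intro t ht
    simp only [Finset.mem_filter, Finset.mem_univ, true_and] at ht ⊢
    rw [hsum ![t.1, t.2]]
    show X t.1 - X t.2 = 0
    rw [ht, sub_self]
  · intro g hg
    funext k
    fin_cases k <;> rfl
  · intro t ht
    rfl

open scoped Classical in
/-- The abstract core inequality. -/
lemma main_aux {Q : Type*} [Fintype Q] (X : Q → ℝ) (hQ : 0 < Fintype.card Q)
    {c1 c2 : ℤ} (h1 : c1 ≠ 0) (h2 : c2 ≠ 0) (c' : List ℤ) :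
    ((Finset.univ.filter fun g : Fin ((c1 :: c2 :: c' : List ℤ)).length → Q =>
        ∑ k, (((c1 :: c2 :: c' : List ℤ).get k : ℤ) : ℝ) * X (g k) = 0).card : ℝ) /
      (Fintype.card Q : ℝ) ^ ((c1 :: c2 :: c' : List ℤ)).length
    ≤ ((Finset.univ.filter fun g : Fin (([1,-1] : List ℤ)).length → Q =>
        ∑ k, ((([1,-1] : List ℤ).get k : ℤ) : ℝ) * X (g k) = 0).card : ℝ) /
      (Fintype.card Q : ℝ) ^ (([1,-1] : List ℤ)).length := by
  set E := (Finset.univ.filter fun t : Q × Q => X t.1 = X t.2).card with hE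
  -- decompose the sum
  have hsum : ∀ g : Fin ((c1 :: c2 :: c' : List ℤ)).length → Q,
      (∑ k, (((c1 :: c2 :: c' : List ℤ).get k : ℤ) : ℝ) * X (g k))
      = (c1:ℝ) * X (g (0 : Fin (c'.length + 1 + 1))) + (c2:ℝ) * X (g (1 : Fin (c'.length + 1 + 1)))
        + ∑ k : Fin c'.length, (c'.get k : ℝ) * X (g k.succ.succ) := by
    intro g
    show (∑ k : Fin (c'.length + 1 + 1), (((c1 :: c2 :: c' : List ℤ).get k : ℤ) : ℝ) * X (g k))
      = _
    rw [Fin.sum_univ_succ, Fin.sum_univ_succ]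
    have e0 : ((c1 :: c2 :: c' : List ℤ).get (0 : Fin (c'.length + 1 + 1))) = c1 := rfl
    have e1 : ((c1 :: c2 :: c' : List ℤ).get ((0 : Fin (c'.length + 1)).succ)) = c2 := rfl
    have e2 : ∀ k : Fin c'.length,
        ((c1 :: c2 :: c' : List ℤ).get k.succ.succ) = c'.get k := by
      intro k; simp [List.get]
    rw [e0, e1]
    simp only [e2]
    have hone : ((0 : Fin (c'.length + 1)).succ : Fin (c'.length + 1 + 1)) = 1 :=
      Fin.succ_zero_eq_one
    rw [hone]
    ring
  -- the count for c is at most card Q ^ c'.length * E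
  have hCc : (Finset.univ.filter fun g : Fin ((c1 :: c2 :: c' : List ℤ)).length → Q =>
        ∑ k, (((c1 :: c2 :: c' : List ℤ).get k : ℤ) : ℝ) * X (g k) = 0).card
      ≤ Fintype.card Q ^ c'.length * E := by
    have hbij : (Finset.univ.filter fun g : Fin ((c1 :: c2 :: c' : List ℤ)).length → Q =>
          ∑ k, (((c1 :: c2 :: c' : List ℤ).get k : ℤ) : ℝ) * X (g k) = 0).card
        = (Finset.univ.filter fun t : Q × Q × (Fin c'.length → Q) =>
            (c1:ℝ) * X t.1 + (c2:ℝ) * X t.2.1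
              + ∑ k, (c'.get k : ℝ) * X (t.2.2 k) = 0).card := by
      apply Finset.card_bij' (fun g _ => (g (0 : Fin (c'.length + 1 + 1)), g (1 : Fin (c'.length + 1 + 1)), fun k => g k.succ.succ))
        (fun t _ => Fin.cons t.1 (Fin.cons t.2.1 t.2.2))
      · intro g hg
        simp only [Finset.mem_filter, Finset.mem_univ, true_and] at hg ⊢
        rw [hsum] at hg
        exact hg
      · intro t ht
        simp only [Finset.mem_filter, Finset.mem_univ, true_and] at ht ⊢
        rw [hsum]
        have hg0 : (Fin.cons t.1 (Fin.cons t.2.1 t.2.2) :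
            Fin (c'.length + 1 + 1) → Q) 0 = t.1 := rfl
        have hg1 : (Fin.cons t.1 (Fin.cons t.2.1 t.2.2) :
            Fin (c'.length + 1 + 1) → Q) 1 = t.2.1 := by
          rw [← Fin.succ_zero_eq_one, Fin.cons_succ, Fin.cons_zero]
        have hgk : ∀ k : Fin c'.length,
            (Fin.cons t.1 (Fin.cons t.2.1 t.2.2) :
              Fin (c'.length + 1 + 1) → Q) k.succ.succ = t.2.2 k := by
          intro k; rw [Fin.cons_succ, Fin.cons_succ]
        rw [hg0, hg1]
        simp only [hgk]
        exact ht
      · intro g hg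
        funext k
        refine Fin.cases ?_ (fun k' => ?_) k
        · rfl
        · refine Fin.cases ?_ (fun k'' => ?_) k'
          · rw [Fin.cons_succ, Fin.succ_zero_eq_one, Fin.cons_zero]
          · rw [Fin.cons_succ, Fin.cons_succ]
      · intro t ht
        rfl
    rw [hbij]
    exact step2 X h1 h2 c'
  rw [count_two X, ← hE]
  rw [div_le_div_iff₀ (by positivity) (by positivity)]
  have hlen : ((c1 :: c2 :: c' : List ℤ)).length = c'.length + 2 := rfl
  have hlen2 : (([1,-1] : List ℤ)).length = 2 := rfl
  have e2 : (Fintype.card Q : ℝ) ^ (([1,-1] : List ℤ)).length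
      = (Fintype.card Q : ℝ) ^ 2 := by rw [hlen2]
  have ec : (Fintype.card Q : ℝ) ^ ((c1 :: c2 :: c' : List ℤ)).length
      = (Fintype.card Q : ℝ) ^ (c'.length + 2) := by rw [hlen]
  rw [e2, ec]
  have hpow : (Fintype.card Q : ℝ) ^ (c'.length + 2)
      = (Fintype.card Q : ℝ) ^ c'.length * (Fintype.card Q : ℝ) ^ 2 := by
    rw [pow_add]
  calc ((Finset.univ.filter fun g : Fin ((c1 :: c2 :: c' : List ℤ)).length → Q =>
        ∑ k, (((c1 :: c2 :: c' : List ℤ).get k : ℤ) : ℝ) * X (g k) = 0).card : ℝ)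
        * (Fintype.card Q : ℝ) ^ 2
      ≤ ((Fintype.card Q ^ c'.length * E : ℕ) : ℝ) * (Fintype.card Q : ℝ) ^ 2 := by
        apply mul_le_mul_of_nonneg_right _ (by positivity)
        exact_mod_cast hCc
    _ = (E : ℝ) * (Fintype.card Q : ℝ) ^ (c'.length + 2) := by
        rw [hpow]
        push_cast
        ring

open scoped Classical in
/-- Reformulation of `kappa` as a count over functions into the quadruple type. -/
lemma kappa_eq {n n' : ℕ} (a : Fin n → ℝ) (b : Fin n' → ℝ) (d : List ℤ) :
    kappa d a b =
      ((Finset.univ.filter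
          fun g : Fin d.length → Fin n × Fin n × Fin n' × Fin n' =>
          ∑ k, (d.get k : ℝ) *
            ((a (g k).1 - a (g k).2.1) * (b (g k).2.2.1 - b (g k).2.2.2)) = 0).card : ℝ) /
      ((n : ℝ) * (n' : ℝ)) ^ (2 * d.length) := by
  rw [kappa]
  congr 1
  · norm_cast
    let e : ((Fin d.length → Fin n) × (Fin d.length → Fin n) ×
        (Fin d.length → Fin n') × (Fin d.length → Fin n'))
        ≃ (Fin d.length → Fin n × Fin n × Fin n' × Fin n') :=
      { toFun := fun t k => (t.1 k, t.2.1 k, t.2.2.1 k, t.2.2.2 k)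
        invFun := fun g => (fun k => (g k).1, fun k => (g k).2.1,
          fun k => (g k).2.2.1, fun k => (g k).2.2.2)
        left_inv := fun t => rfl
        right_inv := fun g => rfl }
    have hcard : Nat.card {t : (Fin d.length → Fin n) × (Fin d.length → Fin n) ×
        (Fin d.length → Fin n') × (Fin d.length → Fin n') //
        ∑ k : Fin d.length, (d.get k : ℝ) *
          (a (t.1 k) - a (t.2.1 k)) * (b (t.2.2.1 k) - b (t.2.2.2 k)) = 0}
        = Nat.card {g : Fin d.length → Fin n × Fin n × Fin n' × Fin n' //
          ∑ k, (d.get k : ℝ) *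
            ((a (g k).1 - a (g k).2.1) * (b (g k).2.2.1 - b (g k).2.2.2)) = 0} := by
      refine Nat.card_congr (Equiv.subtypeEquiv e fun t => ?_)
      have : (∑ k : Fin d.length, (d.get k : ℝ) *
          (a (t.1 k) - a (t.2.1 k)) * (b (t.2.2.1 k) - b (t.2.2.2 k)))
          = ∑ k, (d.get k : ℝ) *
            ((a ((e t) k).1 - a ((e t) k).2.1) * (b ((e t) k).2.2.1 - b ((e t) k).2.2.2)) :=
        Finset.sum_congr rfl fun k _ => mul_assoc _ _ _
      rw [this]
    rw [hcard, Nat.card_eq_fintype_card, Fintype.card_subtype]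
  · push_cast
    ring

/-- For finite sets `A, B` of reals of size ≥ 2 and any tuple `c` of nonzero integers of
length `s ≥ 2`, one has `κ_c(A,B) ≤ κ_{(1,-1)}(A,B)`. -/
theorem stmt11 (n n' : ℕ) (hn : 2 ≤ n) (hn' : 2 ≤ n')
    (a : Fin n → ℝ) (b : Fin n' → ℝ)
    (ha : Function.Injective a) (hb : Function.Injective b)
    (c : List ℤ) (hc : 2 ≤ c.length) (hc0 : ∀ x ∈ c, x ≠ 0) :
    kappa c a b ≤ kappa [1, -1] a b := by
  classical
  obtain ⟨c1, c2, c', rfl⟩ : ∃ c1 c2 c', c = c1 :: c2 :: c' := by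
    match c, hc with
    | x :: y :: u, _ => exact ⟨x, y, u, rfl⟩
  have h1 : c1 ≠ 0 := hc0 c1 (by simp)
  have h2 : c2 ≠ 0 := hc0 c2 (by simp)
  have hn0 : 0 < n := by omega
  have hn'0 : 0 < n' := by omega
  have hnn : (0:ℝ) < (n : ℝ) * (n' : ℝ) := by positivity
  have hcard : (Fintype.card (Fin n × Fin n × Fin n' × Fin n') : ℝ)
      = ((n : ℝ) * (n' : ℝ)) ^ 2 := by
    simp [Fintype.card_prod, Fintype.card_fin]
    push_cast
    ring
  have hcardpos : 0 < Fintype.card (Fin n × Fin n × Fin n' × Fin n') := by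
    have : Nonempty (Fin n × Fin n × Fin n' × Fin n') :=
      ⟨(⟨0, hn0⟩, ⟨0, hn0⟩, ⟨0, hn'0⟩, ⟨0, hn'0⟩)⟩
    exact Fintype.card_pos
  rw [kappa_eq a b (c1 :: c2 :: c'), kappa_eq a b [1, -1]]
  have hd1 : ((n : ℝ) * (n' : ℝ)) ^ (2 * (c1 :: c2 :: c' : List ℤ).length)
      = (Fintype.card (Fin n × Fin n × Fin n' × Fin n') : ℝ)
        ^ (c1 :: c2 :: c' : List ℤ).length := by
    rw [hcard, ← pow_mul, mul_comm]
  have hd2 : ((n : ℝ) * (n' : ℝ)) ^ (2 * ([1,-1] : List ℤ).length)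
      = (Fintype.card (Fin n × Fin n × Fin n' × Fin n') : ℝ)
        ^ ([1,-1] : List ℤ).length := by
    rw [hcard, ← pow_mul, mul_comm]
  rw [hd1, hd2]
  exact main_aux (fun q : Fin n × Fin n × Fin n' × Fin n' =>
    (a q.1 - a q.2.1) * (b q.2.2.1 - b q.2.2.2)) hcardpos h1 h2 c'
end

section
/- Let n ≥ 2 and let A be a multiset of n real numbers with at least two distinct elements. Then A contains, as a submultiset, m copies of a set of r distinct real numbers (i.e., there is a set of r distinct reals each of which has multiplicity at least m in A) for some positive integers m and r with r ≥ 2 and m r³ ≥ M(A)/log n. -/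
open scoped Classical

lemma harm (k : ℕ) : ∑ j ∈ Finset.range k, (1:ℝ)/(j+2) ≤ Real.log (k+1) := by
  induction k with
  | zero => simp
  | succ k ih =>
    rw [Finset.sum_range_succ]
    have hpos : (0:ℝ) < ((k:ℝ)+1)/((k:ℝ)+2) := by positivity
    have h1 := Real.log_le_sub_one_of_pos hpos
    rw [Real.log_div (by positivity) (by positivity)] at h1
    have h2 : ((k:ℝ)+1)/((k:ℝ)+2) - 1 = -(1/((k:ℝ)+2)) := by
      field_simp
      norm_num
    push_cast
    have h3 : Real.log ((k:ℝ)+1) + 1/((k:ℝ)+2) ≤ Real.log ((k:ℝ)+2) := by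
      rw [h2] at h1; linarith
    have : ((k:ℝ)+1+1) = ((k:ℝ)+2) := by ring
    rw [this]
    linarith

/-- `Mstat A = ∑_{i=1}^ℓ (i-1)^2 μᵢ`, where `μ₁ ≥ ⋯ ≥ μ_ℓ` is the multiplicity profile
of the multiset `A` (the multiplicities of its distinct elements in decreasing order). -/
noncomputable def Mstat (B : Multiset ℝ) : ℕ :=
  let D : List ℕ := (Multiset.sort (B.toFinset.val.map fun x => B.count x) (· ≤ ·)).reverse
  ∑ i ∈ Finset.range D.length, i ^ 2 * D.getD i 0

/-- Every multiset `A` of `n ≥ 2` reals with at least two distinct elements contains, as a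
submultiset, `m` copies of a set of `r` distinct reals, for some `m, r` with `r ≥ 2` and
`m r³ ≥ M(A)/log n`. -/
theorem stmt14 (n : ℕ) (hn : 2 ≤ n) (A : Multiset ℝ)
    (hcard : Multiset.card A = n) (hdist : 1 < A.toFinset.card) :
    ∃ (m r : ℕ) (R : Finset ℝ), R.card = r ∧ 2 ≤ r ∧ 0 < m ∧
      (∀ x ∈ R, Multiset.replicate m x ≤ A) ∧
      (Mstat A : ℝ) / Real.log n ≤ ((m * r ^ 3 : ℕ) : ℝ) := by
  set D : List ℕ :=
    (Multiset.sort (A.toFinset.val.map fun x => A.count x) (· ≤ ·)).reverse with hD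
  have hM : Mstat A = ∑ i ∈ Finset.range D.length, i ^ 2 * D.getD i 0 := rfl
  set ℓ := D.length with hℓdef
  -- basic facts about D
  have hDmul : (D : Multiset ℕ) = A.toFinset.val.map (fun x => A.count x) := by
    rw [hD]
    rw [Multiset.coe_reverse, Multiset.sort_eq]
  have hlen : ℓ = A.toFinset.card := by
    have := congrArg Multiset.card hDmul
    simpa [Multiset.card_toFinset] using this
  have hℓ2 : 2 ≤ ℓ := hlen ▸ hdist
  have hℓn : ℓ ≤ n := by
    rw [hlen, ← hcard]; exact Multiset.toFinset_card_le A
  have hsorted : D.Pairwise (· ≥ ·) := by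
    rw [hD]
    exact List.pairwise_reverse.mpr (Multiset.pairwise_sort _ (· ≤ ·))
  have hanti : ∀ i j : ℕ, i ≤ j → (hj : j < ℓ) → D.getD j 0 ≤ D.getD i 0 := by
    intro i j hij hj
    have hi : i < ℓ := lt_of_le_of_lt hij hj
    rw [List.getD_eq_getElem D 0 hj, List.getD_eq_getElem D 0 hi]
    exact hsorted.rel_get_of_le (a := ⟨i, hi⟩) (b := ⟨j, hj⟩) hij
  -- all entries positive
  have hpos : ∀ i, (hi : i < ℓ) → 0 < D.getD i 0 := by
    intro i hi
    rw [List.getD_eq_getElem D 0 hi]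
    have hmem : D[i] ∈ (D : Multiset ℕ) := by
      exact Multiset.mem_coe.mpr (List.getElem_mem hi)
    rw [hDmul] at hmem
    obtain ⟨x, hx, hxe⟩ := Multiset.mem_map.mp hmem
    rw [← hxe]
    exact Multiset.count_pos.mpr (Multiset.mem_toFinset.mp (by exact hx))
  -- maximizer
  obtain ⟨i₀, hi₀mem, hi₀max⟩ := Finset.exists_max_image (Finset.Icc 1 (ℓ-1))
    (fun i => (i+1)^3 * D.getD i 0) ⟨1, Finset.mem_Icc.mpr ⟨le_refl 1, by omega⟩⟩
  rw [Finset.mem_Icc] at hi₀mem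
  have hi₀lt : i₀ < ℓ := by omega
  set m := D.getD i₀ 0 with hm
  set r := i₀ + 1 with hr
  have hmpos : 0 < m := hpos i₀ hi₀lt
  -- the set of elements with multiplicity ≥ m has at least r elements
  have hcount : r ≤ (A.toFinset.filter (fun x => m ≤ A.count x)).card := by
    have h1 : (A.toFinset.filter (fun x => m ≤ A.count x)).card
        = Multiset.countP (fun d => m ≤ d) (D : Multiset ℕ) := by
      rw [hDmul, Multiset.countP_map]
      rfl
    have h2 : Multiset.countP (fun d => m ≤ d) (D : Multiset ℕ)
        = D.countP (fun d => decide (m ≤ d)) := by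
      simp [Multiset.coe_countP]
    rw [h1, h2]
    have htake : ∀ a ∈ D.take r, decide (m ≤ a) = true := by
      intro a ha
      obtain ⟨j, hj, hje⟩ := List.mem_iff_getElem.mp ha
      have hjr : j < r := lt_of_lt_of_le hj (by simp [List.length_take])
      have hjl : j < ℓ := by omega
      have := hanti j i₀ (by omega) hi₀lt
      rw [List.getD_eq_getElem D 0 hjl] at this
      simp only [decide_eq_true_eq]
      rw [← hje, List.getElem_take]
      exact this
    calc r = (D.take r).length := by simp [List.length_take]; omega
      _ = (D.take r).countP (fun d => decide (m ≤ d)) :=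
          (List.countP_eq_length.mpr htake).symm
      _ ≤ D.countP (fun d => decide (m ≤ d)) := by
          conv_rhs => rw [← List.take_append_drop r D]
          rw [List.countP_append]; omega
  obtain ⟨R, hRsub, hRcard⟩ := Finset.exists_subset_card_eq hcount
  refine ⟨m, r, R, hRcard, by omega, hmpos, ?_, ?_⟩
  · intro x hx
    have := Finset.mem_filter.mp (hRsub hx)
    exact Multiset.le_count_iff_replicate_le.mp this.2
  -- the analytic inequality
  have hlogn : 0 < Real.log n := Real.log_pos (by exact_mod_cast by omega)
  rw [div_le_iff₀ hlogn]
  set T : ℝ := ((m * r^3 : ℕ) : ℝ) with hT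
  have hTnn : 0 ≤ T := by positivity
  have hterm : ∀ i ∈ Finset.range ℓ,
      ((i^2 * D.getD i 0 : ℕ) : ℝ) ≤ (if i = 0 then 0 else T / (i+1)) := by
    intro i hi
    rw [Finset.mem_range] at hi
    by_cases h0 : i = 0
    · simp [h0]
    · simp only [h0, if_false]
      have hmax : (i+1)^3 * D.getD i 0 ≤ m * r^3 := by
        have := hi₀max i (Finset.mem_Icc.mpr ⟨by omega, by omega⟩)
        calc (i+1)^3 * D.getD i 0 ≤ (i₀+1)^3 * D.getD i₀ 0 := this
          _ = m * r^3 := by rw [hr, hm]; ring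
      have hnat : i^2 * D.getD i 0 * (i+1) ≤ m * r^3 := by
        calc i^2 * D.getD i 0 * (i+1) ≤ (i+1)^2 * D.getD i 0 * (i+1) := by
              have : i^2 ≤ (i+1)^2 := Nat.pow_le_pow_left (by omega) 2
              nlinarith
          _ = (i+1)^3 * D.getD i 0 := by ring
          _ ≤ m * r^3 := hmax
      rw [le_div_iff₀ (by positivity)]
      calc ((i^2 * D.getD i 0 : ℕ) : ℝ) * ((i:ℝ)+1)
          = ((i^2 * D.getD i 0 * (i+1) : ℕ) : ℝ) := by push_cast; ring
        _ ≤ ((m * r^3 : ℕ) : ℝ) := by exact_mod_cast hnat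
  have hsum : (Mstat A : ℝ) ≤ ∑ i ∈ Finset.range ℓ, (if i = 0 then 0 else T / (i+1)) := by
    rw [hM]
    push_cast
    refine Finset.sum_le_sum ?_
    intro i hi
    have := hterm i hi
    push_cast at this ⊢
    exact this
  have hreindex : ∑ i ∈ Finset.range ℓ, (if i = 0 then (0:ℝ) else T / (i+1))
      = ∑ j ∈ Finset.range (ℓ-1), T / (j+2) := by
    have : ℓ = (ℓ-1) + 1 := by omega
    rw [this, Finset.sum_range_succ']
    simp only [Nat.succ_ne_zero, if_false, if_true]
    push_cast
    norm_num
    refine Finset.sum_congr rfl ?_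
    intro j _
    norm_num
    ring_nf
  have hharm : ∑ j ∈ Finset.range (ℓ-1), T / (j+2) ≤ T * Real.log ℓ := by
    have h1 : ∑ j ∈ Finset.range (ℓ-1), T / (j+2)
        = T * ∑ j ∈ Finset.range (ℓ-1), (1:ℝ)/(j+2) := by
      rw [Finset.mul_sum]
      refine Finset.sum_congr rfl fun j _ => by ring
    rw [h1]
    have h2 := harm (ℓ-1)
    have h3 : ((ℓ-1 : ℕ):ℝ) + 1 = (ℓ:ℝ) := by
      have : (1:ℕ) ≤ ℓ := by omega
      push_cast [Nat.cast_sub this]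
      ring
    rw [h3] at h2
    exact mul_le_mul_of_nonneg_left h2 hTnn
  have hlog : Real.log ℓ ≤ Real.log n :=
    Real.log_le_log (by positivity) (by exact_mod_cast hℓn)
  calc (Mstat A : ℝ) ≤ T * Real.log ℓ := le_trans hsum (hreindex ▸ hharm)
    _ ≤ T * Real.log n := mul_le_mul_of_nonneg_left hlog hTnn
end

section
/- Let A be a multiset of n real numbers in which no single element occurs with multiplicity greater than 2n/3. Then there is a set R of distinct elements of A such that the sum of the multiplicities in A of the elements of R lies in the interval [n/3, 2n/3]. -/
open scoped Classical

/-- If `A` is a multiset of `n` reals in which no element has multiplicity greater than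
`2n/3`, there is a set `R` of distinct elements of `A` whose multiplicities sum to a value
in `[n/3, 2n/3]`. -/
theorem stmt15 (n : ℕ) (A : Multiset ℝ) (hcard : Multiset.card A = n)
    (hmult : ∀ x : ℝ, (A.count x : ℝ) ≤ 2 * n / 3) :
    ∃ R : Finset ℝ, R ⊆ A.toFinset ∧
      (n : ℝ) / 3 ≤ ((∑ x ∈ R, A.count x : ℕ) : ℝ) ∧
      ((∑ x ∈ R, A.count x : ℕ) : ℝ) ≤ 2 * n / 3 := by
  have hsum : ∑ x ∈ A.toFinset, A.count x = n := by
    rw [Multiset.toFinset_sum_count_eq, hcard]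
  have hn0 : (0 : ℝ) ≤ n := by positivity
  set T := A.toFinset.powerset.filter
      (fun S => (n : ℝ) / 3 ≤ ((∑ x ∈ S, A.count x : ℕ) : ℝ)) with hT
  have hTne : T.Nonempty := by
    refine ⟨A.toFinset, ?_⟩
    simp only [hT, Finset.mem_filter, Finset.mem_powerset, subset_refl, true_and, hsum]
    linarith
  obtain ⟨S, hS, hmin⟩ := T.exists_min_image Finset.card hTne
  rw [hT, Finset.mem_filter, Finset.mem_powerset] at hS
  obtain ⟨hSsub, hSlb⟩ := hS
  by_cases hub : ((∑ x ∈ S, A.count x : ℕ) : ℝ) ≤ 2 * n / 3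
  · exact ⟨S, hSsub, hSlb, hub⟩
  · push_neg at hub
    have hSne : S.Nonempty := by
      rcases S.eq_empty_or_nonempty with h | h
      · exfalso; rw [h] at hub; simp at hub; linarith
      · exact h
    obtain ⟨x, hx⟩ := hSne
    have herase : ¬ ((n : ℝ) / 3 ≤ ((∑ y ∈ S.erase x, A.count y : ℕ) : ℝ)) := by
      intro h
      have : S.erase x ∈ T := by
        rw [hT, Finset.mem_filter, Finset.mem_powerset]
        exact ⟨(S.erase_subset x).trans hSsub, h⟩
      have hcardlt : (S.erase x).card < S.card := Finset.card_erase_lt_of_mem hx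
      exact absurd (hmin _ this) (by omega)
    push_neg at herase
    have hsplit : A.count x + ∑ y ∈ S.erase x, A.count y = ∑ y ∈ S, A.count y :=
      Finset.add_sum_erase S (fun y => A.count y) hx
    refine ⟨{x}, by simpa using hSsub hx, ?_, ?_⟩
    · simp only [Finset.sum_singleton]
      have : ((A.count x + ∑ y ∈ S.erase x, A.count y : ℕ) : ℝ)
          = ((∑ y ∈ S, A.count y : ℕ) : ℝ) := by rw [hsplit]
      push_cast at this herase hub ⊢
      linarith
    · simpa using hmult x
end
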